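/- arXiv:1903.09099 — 15 statements merged into one kernel-verified Lean document; each statement's English description precedes it below -/
import Mathlib

section
/- Let x, y ∈ 𝔹² \ {0} with |x| = |y| and |x + y| ≤ 4|x|²/(1 + |x|²). Then τ̃_{𝔹²}(x, y) = log(1 + √(2|x||x-y| / (1 - |x|²))). -/
open Real Metric
open scoped RealInnerProductSpace

lemma bessel_two {E : Type*} [NormedAddCommGroup E] [InnerProductSpace ℝ E]
    (u v p : E) (huv : ⟪u, v⟫ = 0) :
    ⟪u, p⟫ ^ 2 * ‖v‖ ^ 2 + ⟪v, p⟫ ^ 2 * ‖u‖ ^ 2 ≤ ‖u‖ ^ 2 * ‖v‖ ^ 2 * ‖p‖ ^ 2 := by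
  rcases eq_or_ne u 0 with rfl | hu
  · simp
  rcases eq_or_ne v 0 with rfl | hv
  · simp
  have hvu : ⟪v, u⟫ = 0 := by rw [real_inner_comm]; exact huv
  have hq := real_inner_self_nonneg
    (x := (‖u‖ ^ 2 * ‖v‖ ^ 2) • p - (‖v‖ ^ 2 * ⟪u, p⟫) • u - (‖u‖ ^ 2 * ⟪v, p⟫) • v)
  simp only [inner_sub_left, inner_sub_right, real_inner_smul_left, real_inner_smul_right,
    real_inner_self_eq_norm_sq, norm_smul, Real.norm_eq_abs, mul_pow, sq_abs, huv, hvu,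
    real_inner_comm u p, real_inner_comm v p] at hq
  have hu2 : 0 < ‖u‖ ^ 2 := pow_pos (norm_pos_iff.mpr hu) 2
  have hv2 : 0 < ‖v‖ ^ 2 := pow_pos (norm_pos_iff.mpr hv) 2
  nlinarith [mul_pos hu2 hv2, hq]

/-- The scale invariant Cassinian metric
`τ̃_D(x,y) = log(1 + sup_{p ∈ ∂D} |x-y|/√(|x-p||y-p|))`. -/
noncomputable def scTau {E : Type*} [NormedAddCommGroup E] (D : Set E) (x y : E) : ℝ :=
  Real.log (1 + ⨆ p : frontier D, ‖x - y‖ / Real.sqrt (‖x - (p : E)‖ * ‖y - (p : E)‖))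

set_option maxHeartbeats 1000000 in
theorem stmt2 (x y : EuclideanSpace ℝ (Fin 2))
    (hx : x ∈ Metric.ball (0 : EuclideanSpace ℝ (Fin 2)) 1)
    (hy : y ∈ Metric.ball (0 : EuclideanSpace ℝ (Fin 2)) 1)
    (hx0 : x ≠ 0) (hy0 : y ≠ 0) (hnorm : ‖x‖ = ‖y‖)
    (h : ‖x + y‖ ≤ 4 * ‖x‖ ^ 2 / (1 + ‖x‖ ^ 2)) :
    scTau (Metric.ball (0 : EuclideanSpace ℝ (Fin 2)) 1) x y
      = Real.log (1 + Real.sqrt (2 * ‖x‖ * ‖x - y‖ / (1 - ‖x‖ ^ 2))) := by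
  set r : ℝ := ‖x‖ with hrdef
  have hr0 : 0 < r := norm_pos_iff.mpr hx0
  have hr1 : r < 1 := by simpa [← hrdef] using mem_ball_zero_iff.mp hx
  set m : ℝ := ‖x + y‖ with hmdef
  set k : ℝ := ‖x - y‖ with hkdef
  have hm0 : 0 ≤ m := norm_nonneg _
  have ha0 : (0:ℝ) < 1 + r ^ 2 := by positivity
  have ham : m * (1 + r ^ 2) ≤ 4 * r ^ 2 := by
    rw [div_eq_mul_inv] at h
    calc m * (1 + r ^ 2) ≤ (4 * r ^ 2 * (1 + r ^ 2)⁻¹) * (1 + r ^ 2) :=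
          mul_le_mul_of_nonneg_right h (le_of_lt ha0)
      _ = 4 * r ^ 2 := by field_simp
  have hpar : m ^ 2 + k ^ 2 = 4 * r ^ 2 := by
    rw [hmdef, hkdef, norm_add_sq_real, norm_sub_sq_real, ← hnorm, ← hrdef]; ring
  have horth : ⟪x + y, x - y⟫ = 0 := by
    simp only [inner_sub_right, inner_add_left, real_inner_self_eq_norm_sq]
    rw [← hnorm, ← hrdef, real_inner_comm y x]
    ring
  have hxy : x ≠ y := by
    intro hxy
    have hm2r : m = 2 * r := by
      rw [hmdef, hxy, ← two_smul ℝ y, norm_smul, ← hnorm]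
      simp
    nlinarith [ham, hr0, hr1, mul_pos hr0 (pow_pos (by linarith : (0:ℝ) < 1 - r) 2)]
  have hk0 : 0 < k := by rw [hkdef]; exact norm_pos_iff.mpr (sub_ne_zero.mpr hxy)
  have h1r2 : (0:ℝ) < 1 - r ^ 2 := by nlinarith
  set N₀ : ℝ := k * (1 - r ^ 2) / (2 * r) with hN₀def
  have hN₀0 : 0 < N₀ := div_pos (mul_pos hk0 h1r2) (by linarith)
  have hN₀sq : N₀ ^ 2 = k ^ 2 * (1 - r ^ 2) ^ 2 / (4 * r ^ 2) := by
    rw [hN₀def]; field_simp; ring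
  set S : ℝ := Real.sqrt (2 * r * k / (1 - r ^ 2)) with hSdef
  have hSN₀ : k / Real.sqrt N₀ = S := by
    rw [hSdef, hN₀def]
    rw [show 2 * r * k / (1 - r ^ 2) = k ^ 2 / (k * (1 - r ^ 2) / (2 * r)) by
      field_simp]
    rw [Real.sqrt_div (by positivity : (0:ℝ) ≤ k ^ 2), Real.sqrt_sq hk0.le]
  -- key pointwise bound
  have key : ∀ p : EuclideanSpace ℝ (Fin 2), ‖p‖ = 1 → N₀ ≤ ‖x - p‖ * ‖y - p‖ := by
    intro p hp
    have hxp : ‖x - p‖ ^ 2 = 1 + r ^ 2 - 2 * ⟪x, p⟫ := by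
      rw [norm_sub_sq_real, hp, ← hrdef]; ring
    have hyp : ‖y - p‖ ^ 2 = 1 + r ^ 2 - 2 * ⟪y, p⟫ := by
      rw [norm_sub_sq_real, hp, ← hnorm]; ring
    have hb := bessel_two (x + y) (x - y) p horth
    rw [← hmdef, ← hkdef, hp] at hb
    rw [inner_add_left, inner_sub_left] at hb
    have hdk : (⟪x, p⟫ - ⟪y, p⟫) ^ 2 ≤ k ^ 2 := by
      have h1 : |⟪x - y, p⟫| ≤ ‖x - y‖ * ‖p‖ := abs_real_inner_le_norm _ _
      rw [hp, ← hkdef, mul_one, inner_sub_left] at h1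
      nlinarith [abs_nonneg (⟪x, p⟫ - ⟪y, p⟫), sq_abs (⟪x, p⟫ - ⟪y, p⟫)]
    have hsq : N₀ ^ 2 ≤ ‖x - p‖ ^ 2 * ‖y - p‖ ^ 2 := by
      rw [hxp, hyp, hN₀sq, div_le_iff₀ (by positivity)]
      have hk2' : k ^ 2 = 4 * r ^ 2 - m ^ 2 := by linarith
      rcases eq_or_lt_of_le hm0 with hm | hm
      · -- m = 0
        have hmm : m = 0 := hm.symm
        rw [hmm] at hb hk2'
        have hs2 : (⟪x, p⟫ + ⟪y, p⟫) ^ 2 ≤ 0 := by nlinarith [mul_pos hk0 hk0]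
        have hs0 : ⟪x, p⟫ + ⟪y, p⟫ = 0 :=
          pow_eq_zero_iff two_ne_zero |>.mp (le_antisymm hs2 (sq_nonneg _))
        nlinarith [hdk, hs0, hk2', mul_pos hk0 hk0]
      · -- m > 0
        rw [hk2'] at hb ⊢
        have hb4 : 4 * r ^ 2 * ((⟪x, p⟫ + ⟪y, p⟫) ^ 2 * (4 * r ^ 2 - m ^ 2)
              + (⟪x, p⟫ - ⟪y, p⟫) ^ 2 * m ^ 2)
            ≤ 4 * r ^ 2 * (m ^ 2 * (4 * r ^ 2 - m ^ 2) * 1 ^ 2) :=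
          mul_le_mul_of_nonneg_left hb (by positivity)
        nlinarith [hb4, sq_nonneg (4 * r ^ 2 * (⟪x, p⟫ + ⟪y, p⟫) - (1 + r ^ 2) * m ^ 2),
          mul_pos hm hm]
    nlinarith [hsq, hN₀0, mul_nonneg (norm_nonneg (x - p)) (norm_nonneg (y - p))]
  -- the attaining point
  set c₀ : ℝ := (1 + r ^ 2) * m / (4 * r ^ 2) with hc₀def
  have hc₀0 : 0 ≤ c₀ := div_nonneg (mul_nonneg ha0.le hm0) (by positivity)
  have hc₀1 : c₀ ≤ 1 := by
    rw [hc₀def, div_le_one (by positivity)]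
    nlinarith [ham]
  set t₀ : ℝ := Real.sqrt (1 - c₀ ^ 2) with ht₀def
  have ht₀sq : t₀ ^ 2 = 1 - c₀ ^ 2 := Real.sq_sqrt (by nlinarith)
  set p₀ : EuclideanSpace ℝ (Fin 2) := (c₀ / m) • (x + y) + (t₀ / k) • (x - y) with hp₀def
  have hcm2 : (c₀ / m) * m ^ 2 = c₀ * m := by
    rcases eq_or_ne m 0 with hmm | hmm
    · simp [hmm]
    · field_simp
  have hcm2' : (c₀ / m) ^ 2 * m ^ 2 = c₀ ^ 2 := by
    rcases eq_or_ne m 0 with hmm | hmm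
    · rw [hc₀def, hmm]; simp
    · field_simp
  have hip : ⟪x + y, p₀⟫ = c₀ * m := by
    rw [hp₀def, inner_add_right, real_inner_smul_right, real_inner_smul_right,
      real_inner_self_eq_norm_sq, ← hmdef, horth]
    rw [mul_zero, add_zero, hcm2]
  have hid : ⟪x - y, p₀⟫ = t₀ * k := by
    have horth' : ⟪x - y, x + y⟫ = 0 := by rw [real_inner_comm]; exact horth
    rw [hp₀def, inner_add_right, real_inner_smul_right, real_inner_smul_right,
      real_inner_self_eq_norm_sq, ← hkdef, horth']
    rw [mul_zero, zero_add]
    field_simp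
  have hnp₀ : ‖p₀‖ = 1 := by
    have hsq1 : ‖p₀‖ ^ 2 = 1 := by
      rw [hp₀def, norm_add_sq_real, real_inner_smul_left, real_inner_smul_right, horth]
      simp only [norm_smul, Real.norm_eq_abs, mul_pow, sq_abs, ← hmdef, ← hkdef]
      rw [mul_zero, mul_zero]
      have : (t₀ / k) ^ 2 * k ^ 2 = t₀ ^ 2 := by field_simp
      rw [this, hcm2', ht₀sq]
      ring
    rw [← Real.sqrt_sq (norm_nonneg p₀), hsq1, Real.sqrt_one]
  have hxip : 2 * ⟪x, p₀⟫ = c₀ * m + t₀ * k := by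
    rw [← hip, ← hid, inner_add_left, inner_sub_left]; ring
  have hyip : 2 * ⟪y, p₀⟫ = c₀ * m - t₀ * k := by
    rw [← hip, ← hid, inner_add_left, inner_sub_left]; ring
  have hk2 : k ^ 2 = 4 * r ^ 2 - m ^ 2 := by linarith
  have hval : ‖x - p₀‖ * ‖y - p₀‖ = N₀ := by
    have e1 : ‖x - p₀‖ ^ 2 = 1 + r ^ 2 - 2 * ⟪x, p₀⟫ := by
      rw [norm_sub_sq_real, hnp₀, ← hrdef]; ring
    have e2 : ‖y - p₀‖ ^ 2 = 1 + r ^ 2 - 2 * ⟪y, p₀⟫ := by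
      rw [norm_sub_sq_real, hnp₀, ← hnorm]; ring
    have hsqeq : (‖x - p₀‖ * ‖y - p₀‖) ^ 2 = N₀ ^ 2 := by
      rw [mul_pow, e1, e2]
      rw [show 1 + r ^ 2 - 2 * ⟪x, p₀⟫ = 1 + r ^ 2 - (c₀ * m + t₀ * k) by linarith [hxip]]
      rw [show 1 + r ^ 2 - 2 * ⟪y, p₀⟫ = 1 + r ^ 2 - (c₀ * m - t₀ * k) by linarith [hyip]]
      rw [show (1 + r ^ 2 - (c₀ * m + t₀ * k)) * (1 + r ^ 2 - (c₀ * m - t₀ * k))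
          = (1 + r ^ 2 - c₀ * m) ^ 2 - t₀ ^ 2 * k ^ 2 by ring]
      rw [ht₀sq, hN₀sq, hk2, hc₀def]
      field_simp
      ring
    have h1 : 0 ≤ ‖x - p₀‖ * ‖y - p₀‖ := by positivity
    calc ‖x - p₀‖ * ‖y - p₀‖ = Real.sqrt ((‖x - p₀‖ * ‖y - p₀‖) ^ 2) := (Real.sqrt_sq h1).symm
      _ = Real.sqrt (N₀ ^ 2) := by rw [hsqeq]
      _ = N₀ := Real.sqrt_sq hN₀0.le
  -- the supremum
  have hfr : frontier (Metric.ball (0 : EuclideanSpace ℝ (Fin 2)) 1)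
      = Metric.sphere (0 : EuclideanSpace ℝ (Fin 2)) 1 := frontier_ball 0 one_ne_zero
  have hp₀mem : p₀ ∈ frontier (Metric.ball (0 : EuclideanSpace ℝ (Fin 2)) 1) := by
    rw [hfr, mem_sphere_zero_iff_norm]; exact hnp₀
  haveI hne : Nonempty (frontier (Metric.ball (0 : EuclideanSpace ℝ (Fin 2)) 1)) :=
    ⟨⟨p₀, hp₀mem⟩⟩
  have hub : ∀ q : frontier (Metric.ball (0 : EuclideanSpace ℝ (Fin 2)) 1),
      k / Real.sqrt (‖x - (q : EuclideanSpace ℝ (Fin 2))‖ * ‖y - (q : EuclideanSpace ℝ (Fin 2))‖) ≤ S := by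
    rintro ⟨q, hq⟩
    have hq1 : ‖q‖ = 1 := by
      rw [hfr, mem_sphere_zero_iff_norm] at hq; exact hq
    have hN := key q hq1
    have h2 : 0 < Real.sqrt N₀ := Real.sqrt_pos.mpr hN₀0
    have h1 : Real.sqrt N₀ ≤ Real.sqrt (‖x - q‖ * ‖y - q‖) := Real.sqrt_le_sqrt hN
    calc k / Real.sqrt (‖x - q‖ * ‖y - q‖) ≤ k / Real.sqrt N₀ :=
          div_le_div_of_nonneg_left hk0.le h2 h1
      _ = S := hSN₀
  have hbdd : BddAbove (Set.range fun q : frontier (Metric.ball (0 : EuclideanSpace ℝ (Fin 2)) 1) =>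
      k / Real.sqrt (‖x - (q : EuclideanSpace ℝ (Fin 2))‖ * ‖y - (q : EuclideanSpace ℝ (Fin 2))‖)) := by
    refine ⟨S, ?_⟩
    rintro _ ⟨q, rfl⟩
    exact hub q
  have hsup : (⨆ q : frontier (Metric.ball (0 : EuclideanSpace ℝ (Fin 2)) 1),
      k / Real.sqrt (‖x - (q : EuclideanSpace ℝ (Fin 2))‖ * ‖y - (q : EuclideanSpace ℝ (Fin 2))‖)) = S := by
    apply le_antisymm
    · exact ciSup_le hub
    · have heq : k / Real.sqrt (‖x - p₀‖ * ‖y - p₀‖) = S := by rw [hval, hSN₀]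
      calc S = k / Real.sqrt (‖x - p₀‖ * ‖y - p₀‖) := heq.symm
        _ ≤ _ := le_ciSup hbdd ⟨p₀, hp₀mem⟩
  unfold scTau
  rw [← hkdef, hsup]
end

section
/- Let x, y ∈ 𝔹² \ {0} with |x| = |y| and |x + y| > 4|x|²/(1 + |x|²). Then τ̃_{𝔹²}(x, y) = log(1 + |x-y| / √(1 + |x|² - |x+y|)). -/
open Metric Real
open scoped RealInnerProductSpace

lemma bessel2 {E : Type*} [NormedAddCommGroup E] [InnerProductSpace ℝ E]
    (m d p : E) (hp : ‖p‖ = 1) (hmd : ⟪m, d⟫ = 0) :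
    ‖d‖ ^ 2 * ⟪m, p⟫ ^ 2 + ‖m‖ ^ 2 * ⟪d, p⟫ ^ 2 ≤ ‖m‖ ^ 2 * ‖d‖ ^ 2 := by
  rcases eq_or_ne m 0 with rfl | hm
  · simp
  rcases eq_or_ne d 0 with rfl | hd
  · simp
  have hmd' : ⟪d, m⟫ = 0 := by rw [real_inner_comm]; exact hmd
  have hM : (0:ℝ) < ‖m‖ ^ 2 := pow_pos (norm_pos_iff.mpr hm) 2
  have hD : (0:ℝ) < ‖d‖ ^ 2 := pow_pos (norm_pos_iff.mpr hd) 2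
  have h0 : (0:ℝ) ≤ ⟪(‖m‖^2*‖d‖^2) • p - (‖d‖^2*⟪m,p⟫) • m - (‖m‖^2*⟪d,p⟫) • d,
      (‖m‖^2*‖d‖^2) • p - (‖d‖^2*⟪m,p⟫) • m - (‖m‖^2*⟪d,p⟫) • d⟫ :=
    real_inner_self_nonneg
  simp only [inner_sub_left, inner_sub_right, real_inner_smul_left,
    real_inner_smul_right] at h0
  simp only [real_inner_self_eq_norm_sq, hmd, hmd', hp, real_inner_comm m p,
    real_inner_comm d p] at h0
  nlinarith [h0, mul_pos hM hD, hM, hD]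

lemma keyineq (s mn dn r2 a b : ℝ) (hCS : a + b ≤ mn) (hm : 0 < mn)
    (hcond : 4 * r2 < s * mn) (hpar : mn ^ 2 + dn ^ 2 = 4 * r2)
    (hB : dn ^ 2 * (a + b) ^ 2 + mn ^ 2 * (a - b) ^ 2 ≤ mn ^ 2 * dn ^ 2) :
    (s - mn) ^ 2 ≤ (s - 2 * a) * (s - 2 * b) := by
  have hbr : 0 < (2 * s - mn - (a + b)) * mn ^ 2 - dn ^ 2 * (mn + (a + b)) := by
    nlinarith [mul_nonneg (sub_nonneg.mpr hCS) (by positivity : (0:ℝ) ≤ mn ^ 2 + dn ^ 2),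
      mul_pos hm (sub_pos.mpr hcond)]
  nlinarith [mul_nonneg (sub_nonneg.mpr hCS) hbr.le, hB, mul_pos hm hm]

lemma sqrtle (c P : ℝ) (hc : 0 < c) (hP : 0 ≤ P) (h : c ^ 2 ≤ P ^ 2) : c ≤ P := by
  nlinarith


theorem stmt3 (x y : EuclideanSpace ℝ (Fin 2))
    (hx : x ∈ Metric.ball (0 : EuclideanSpace ℝ (Fin 2)) 1)
    (hy : y ∈ Metric.ball (0 : EuclideanSpace ℝ (Fin 2)) 1)
    (hx0 : x ≠ 0) (hy0 : y ≠ 0) (hnorm : ‖x‖ = ‖y‖)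
    (h : ‖x + y‖ > 4 * ‖x‖ ^ 2 / (1 + ‖x‖ ^ 2)) :
    scTau (Metric.ball (0 : EuclideanSpace ℝ (Fin 2)) 1) x y
      = Real.log (1 + ‖x - y‖ / Real.sqrt (1 + ‖x‖ ^ 2 - ‖x + y‖)) := by
  have hr0 : 0 < ‖x‖ := norm_pos_iff.mpr hx0
  have hr1 : ‖x‖ < 1 := mem_ball_zero_iff.mp hx
  have hn2 : ‖x‖ ^ 2 = ‖y‖ ^ 2 := by rw [hnorm]
  have hs0 : (0:ℝ) < 1 + ‖x‖ ^ 2 := by positivity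
  have hmpos : 0 < ‖x + y‖ := lt_of_le_of_lt (by positivity) h
  have hcond : 4 * ‖x‖ ^ 2 < (1 + ‖x‖ ^ 2) * ‖x + y‖ := by
    rw [gt_iff_lt, div_lt_iff₀ hs0] at h; linarith
  have hm2r : ‖x + y‖ ≤ 2 * ‖x‖ := by
    calc ‖x + y‖ ≤ ‖x‖ + ‖y‖ := norm_add_le x y
    _ = 2 * ‖x‖ := by rw [← hnorm]; ring
  have hsm : 0 < 1 + ‖x‖ ^ 2 - ‖x + y‖ := by nlinarith [sq_nonneg (1 - ‖x‖)]
  have hadd := norm_add_sq_real x y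
  have hsub := norm_sub_sq_real x y
  have hpar : ‖x + y‖ ^ 2 + ‖x - y‖ ^ 2 = 4 * ‖x‖ ^ 2 := by nlinarith [hadd, hsub, hn2]
  have hmd : ⟪x + y, x - y⟫ = 0 := by
    have : ⟪x + y, x - y⟫ = ‖x‖^2 - ‖y‖^2 := by
      simp only [inner_add_left, inner_sub_right, real_inner_self_eq_norm_sq,
        real_inner_comm x y]
      ring
    rw [this, hn2]; ring
  -- the maximizing point
  have hp₀s : ‖x + y‖⁻¹ • (x + y) ∈ sphere (0 : EuclideanSpace ℝ (Fin 2)) 1 := by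
    simp only [mem_sphere_iff_norm, sub_zero, norm_smul, norm_inv, norm_norm]
    exact inv_mul_cancel₀ hmpos.ne'
  have hxm : ⟪x, x + y⟫ = ‖x + y‖ ^ 2 / 2 := by
    rw [inner_add_right, real_inner_self_eq_norm_sq]; nlinarith [hadd, hn2]
  have hym : ⟪y, x + y⟫ = ‖x + y‖ ^ 2 / 2 := by
    rw [inner_add_right, real_inner_self_eq_norm_sq]
    have hc : ⟪y, x⟫ = ⟪x, y⟫ := real_inner_comm x y
    linarith [hadd, hn2, hc]
  have hxp₀ : ‖x - ‖x + y‖⁻¹ • (x + y)‖ ^ 2 = 1 + ‖x‖ ^ 2 - ‖x + y‖ := by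
    rw [norm_sub_sq_real, real_inner_smul_right, hxm, norm_smul, norm_inv, norm_norm,
      inv_mul_cancel₀ hmpos.ne']
    field_simp
    ring
  have hyp₀ : ‖y - ‖x + y‖⁻¹ • (x + y)‖ ^ 2 = 1 + ‖x‖ ^ 2 - ‖x + y‖ := by
    rw [norm_sub_sq_real, real_inner_smul_right, hym, norm_smul, norm_inv, norm_norm,
      inv_mul_cancel₀ hmpos.ne', ← hn2]
    field_simp
    ring
  have hxv : ‖x - ‖x + y‖⁻¹ • (x + y)‖ = Real.sqrt (1 + ‖x‖ ^ 2 - ‖x + y‖) := by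
    rw [← hxp₀, Real.sqrt_sq (norm_nonneg _)]
  have hyv : ‖y - ‖x + y‖⁻¹ • (x + y)‖ = Real.sqrt (1 + ‖x‖ ^ 2 - ‖x + y‖) := by
    rw [← hyp₀, Real.sqrt_sq (norm_nonneg _)]
  have hprod₀ : ‖x - ‖x + y‖⁻¹ • (x + y)‖ * ‖y - ‖x + y‖⁻¹ • (x + y)‖
      = 1 + ‖x‖ ^ 2 - ‖x + y‖ := by
    rw [hxv, hyv, Real.mul_self_sqrt hsm.le]
  -- key bound for every p on the sphere
  have key : ∀ p : EuclideanSpace ℝ (Fin 2), ‖p‖ = 1 →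
      1 + ‖x‖ ^ 2 - ‖x + y‖ ≤ ‖x - p‖ * ‖y - p‖ := by
    intro p hp
    have hmp : ⟪x + y, p⟫ = ⟪x, p⟫ + ⟪y, p⟫ := inner_add_left _ _ _
    have hdp : ⟪x - y, p⟫ = ⟪x, p⟫ - ⟪y, p⟫ := inner_sub_left _ _ _
    have hCS : ⟪x, p⟫ + ⟪y, p⟫ ≤ ‖x + y‖ := by
      have := real_inner_le_norm (x + y) p
      rw [hmp, hp, mul_one] at this; exact this
    have hxpsq : ‖x - p‖ ^ 2 = 1 + ‖x‖ ^ 2 - 2 * ⟪x, p⟫ := by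
      rw [norm_sub_sq_real, hp]; ring
    have hypsq : ‖y - p‖ ^ 2 = 1 + ‖x‖ ^ 2 - 2 * ⟪y, p⟫ := by
      rw [norm_sub_sq_real, hp, ← hn2]; ring
    have hB := bessel2 (x + y) (x - y) p hp hmd
    rw [hmp, hdp] at hB
    have hsq := keyineq (1 + ‖x‖ ^ 2) ‖x + y‖ ‖x - y‖ (‖x‖ ^ 2) ⟪x, p⟫ ⟪y, p⟫
      hCS hmpos hcond hpar hB
    apply sqrtle _ _ hsm (mul_nonneg (norm_nonneg _) (norm_nonneg _))
    rw [mul_pow, hxpsq, hypsq]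
    exact hsq
  -- compute the supremum
  have hfront : frontier (ball (0 : EuclideanSpace ℝ (Fin 2)) 1) = sphere 0 1 :=
    frontier_ball 0 one_ne_zero
  have hbound : ∀ p : frontier (ball (0 : EuclideanSpace ℝ (Fin 2)) 1),
      ‖x - y‖ / Real.sqrt (‖x - (p : EuclideanSpace ℝ (Fin 2))‖ *
        ‖y - (p : EuclideanSpace ℝ (Fin 2))‖)
      ≤ ‖x - y‖ / Real.sqrt (1 + ‖x‖ ^ 2 - ‖x + y‖) := by
    rintro ⟨p, hp⟩
    rw [hfront] at hp
    have hp1 : ‖p‖ = 1 := by simpa using hp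
    have h1 : Real.sqrt (1 + ‖x‖ ^ 2 - ‖x + y‖) ≤ Real.sqrt (‖x - p‖ * ‖y - p‖) :=
      Real.sqrt_le_sqrt (key p hp1)
    have h2 : 0 < Real.sqrt (1 + ‖x‖ ^ 2 - ‖x + y‖) := Real.sqrt_pos.mpr hsm
    exact div_le_div_of_nonneg_left (norm_nonneg _) h2 h1
  have hp₀' : ‖x + y‖⁻¹ • (x + y) ∈ frontier (ball (0 : EuclideanSpace ℝ (Fin 2)) 1) := by
    rw [hfront]; exact hp₀s
  have hne : Nonempty (frontier (ball (0 : EuclideanSpace ℝ (Fin 2)) 1)) :=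
    ⟨⟨_, hp₀'⟩⟩
  have hsup : (⨆ p : frontier (ball (0 : EuclideanSpace ℝ (Fin 2)) 1),
      ‖x - y‖ / Real.sqrt (‖x - (p : EuclideanSpace ℝ (Fin 2))‖ *
        ‖y - (p : EuclideanSpace ℝ (Fin 2))‖))
      = ‖x - y‖ / Real.sqrt (1 + ‖x‖ ^ 2 - ‖x + y‖) := by
    apply le_antisymm (ciSup_le hbound)
    have hle := le_ciSup (f := fun p : frontier (ball (0 : EuclideanSpace ℝ (Fin 2)) 1) =>
        ‖x - y‖ / Real.sqrt (‖x - (p : EuclideanSpace ℝ (Fin 2))‖ *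
          ‖y - (p : EuclideanSpace ℝ (Fin 2))‖))
      ⟨_, Set.forall_mem_range.mpr hbound⟩ ⟨_, hp₀'⟩
    calc ‖x - y‖ / Real.sqrt (1 + ‖x‖ ^ 2 - ‖x + y‖)
        = ‖x - y‖ / Real.sqrt (‖x - ‖x + y‖⁻¹ • (x + y)‖ * ‖y - ‖x + y‖⁻¹ • (x + y)‖) := by
          rw [hprod₀]
      _ ≤ _ := hle
  rw [scTau, hsup]
end

section
/- For every x in the open unit disk 𝔹², τ̃_{𝔹²}(0, x) = log(1 + |x| / √(1 - |x|)). -/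
open Metric

section
variable {E : Type*} [NormedAddCommGroup E] {r : ℝ}

lemma sub_norm_le_norm_sub_of_mem_sphere {x p : E} (hp : p ∈ sphere (0 : E) r) :
    r - ‖x‖ ≤ ‖x - p‖ := by
  rw [mem_sphere_zero_iff_norm] at hp
  linarith [norm_sub_norm_le p x, norm_sub_rev x p]

variable [NormedSpace ℝ E]

lemma exists_mem_sphere_norm_sub_eq [Nontrivial E] {x : E} (hx : ‖x‖ ≤ r) :
    ∃ p ∈ sphere (0 : E) r, ‖x - p‖ = r - ‖x‖ := by
  have hr : 0 ≤ r := (norm_nonneg x).trans hx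
  rcases eq_or_ne x 0 with rfl | hx0
  · obtain ⟨p, hp⟩ := (NormedSpace.sphere_nonempty (x := (0 : E))).mpr hr
    refine ⟨p, hp, ?_⟩
    simpa using hp
  · have hxn : 0 < ‖x‖ := norm_pos_iff.mpr hx0
    refine ⟨(r / ‖x‖) • x, ?_, ?_⟩
    · simp [norm_smul, abs_of_nonneg hr, hxn.ne']
    · have hx_sub : x - (r / ‖x‖) • x = -((r / ‖x‖ - 1) • x) := by
        rw [sub_smul, one_smul]; abel
      have hcoef : 0 ≤ r / ‖x‖ - 1 := by
        rw [sub_nonneg, one_le_div hxn]; exact hx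
      rw [hx_sub, norm_neg, norm_smul, Real.norm_of_nonneg hcoef, sub_mul,
        div_mul_cancel₀ _ hxn.ne', one_mul]

theorem scTau_ball_zero_left [Nontrivial E] (hr : 0 < r) {x : E} (hx : ‖x‖ < r) :
    scTau (ball (0 : E) r) 0 x = Real.log (1 + ‖x‖ / √(r * (r - ‖x‖))) := by
  have bound : ∀ p : sphere (0 : E) r,
      ‖0 - x‖ / √(‖0 - (p : E)‖ * ‖x - p‖) ≤ ‖x‖ / √(r * (r - ‖x‖)) := by
    rintro ⟨p, hp⟩
    rw [zero_sub, norm_neg, zero_sub, norm_neg, mem_sphere_zero_iff_norm.mp hp]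
    have hxp := sub_norm_le_norm_sub_of_mem_sphere (x := x) hp
    gcongr
  obtain ⟨p₀, hp₀, hxp₀⟩ := exists_mem_sphere_norm_sub_eq hx.le
  have : Nonempty (sphere (0 : E) r) := ⟨⟨p₀, hp₀⟩⟩
  rw [scTau, frontier_ball _ hr.ne']
  congr 2
  refine le_antisymm (ciSup_le bound)
    (le_ciSup_of_le ⟨_, Set.forall_mem_range.mpr bound⟩ ⟨p₀, hp₀⟩ ?_)
  rw [zero_sub, norm_neg, zero_sub, norm_neg, mem_sphere_zero_iff_norm.mp hp₀, hxp₀]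

end

theorem stmt4 (x : EuclideanSpace ℝ (Fin 2))
    (hx : x ∈ Metric.ball (0 : EuclideanSpace ℝ (Fin 2)) 1) :
    scTau (Metric.ball (0 : EuclideanSpace ℝ (Fin 2)) 1) 0 x
      = Real.log (1 + ‖x‖ / Real.sqrt (1 - ‖x‖)) := by
  simpa using scTau_ball_zero_left one_pos (mem_ball_zero_iff.mp hx)
end

section
/- Let x, y ∈ 𝔹² with x = ty for some real t > 0 and |x| ≤ |y|. Then τ̃_{𝔹²}(x, y) = log(1 + |x-y| / √((1-|x|)(1-|y|))). -/
theorem stmt5 (x y : EuclideanSpace ℝ (Fin 2))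
    (hx : x ∈ Metric.ball (0 : EuclideanSpace ℝ (Fin 2)) 1)
    (hy : y ∈ Metric.ball (0 : EuclideanSpace ℝ (Fin 2)) 1)
    (t : ℝ) (ht : 0 < t) (hxy : x = t • y) (hle : ‖x‖ ≤ ‖y‖) :
    scTau (Metric.ball (0 : EuclideanSpace ℝ (Fin 2)) 1) x y
      = Real.log (1 + ‖x - y‖ / Real.sqrt ((1 - ‖x‖) * (1 - ‖y‖))) := by
  have hx1 : ‖x‖ < 1 := by simpa using hx
  have hy1 : ‖y‖ < 1 := by simpa using hy
  unfold scTau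
  congr 2
  rw [frontier_ball (0 : EuclideanSpace ℝ (Fin 2)) one_ne_zero]
  haveI hne : Nonempty ↥(Metric.sphere (0 : EuclideanSpace ℝ (Fin 2)) 1) :=
    (NormedSpace.sphere_nonempty.mpr zero_le_one).to_subtype
  by_cases hy0 : y = 0
  · have hx0 : x = 0 := by simp [hxy, hy0]
    subst hy0; subst hx0
    simp
  · have hb : 0 < ‖y‖ := norm_pos_iff.mpr hy0
    set p₀ : EuclideanSpace ℝ (Fin 2) := ‖y‖⁻¹ • y with hp₀
    have hp₀mem : p₀ ∈ Metric.sphere (0 : EuclideanSpace ℝ (Fin 2)) 1 := by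
      simp [hp₀, norm_smul, abs_of_pos (inv_pos.mpr hb), inv_mul_cancel₀ hb.ne']
    have hxn : ‖x‖ = t * ‖y‖ := by
      rw [hxy, norm_smul, Real.norm_eq_abs, abs_of_pos ht]
    have hxp : ‖x - p₀‖ = 1 - ‖x‖ := by
      have h1 : x - p₀ = (t - ‖y‖⁻¹) • y := by rw [hxy, hp₀, sub_smul]
      rw [h1, norm_smul, Real.norm_eq_abs]
      have h2 : |t - ‖y‖⁻¹| * ‖y‖ = |t * ‖y‖ - 1| := by
        calc |t - ‖y‖⁻¹| * ‖y‖ = |(t - ‖y‖⁻¹) * ‖y‖| := by rw [abs_mul, abs_of_pos hb]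
          _ = |t * ‖y‖ - 1| := by rw [sub_mul, inv_mul_cancel₀ hb.ne']
      rw [h2, ← hxn, abs_of_nonpos (by linarith), neg_sub]
    have hyp : ‖y - p₀‖ = 1 - ‖y‖ := by
      have h1 : y - p₀ = (1 - ‖y‖⁻¹) • y := by
        rw [hp₀, sub_smul, one_smul]
      rw [h1, norm_smul, Real.norm_eq_abs]
      have h2 : |1 - ‖y‖⁻¹| * ‖y‖ = |‖y‖ - 1| := by
        calc |1 - ‖y‖⁻¹| * ‖y‖ = |(1 - ‖y‖⁻¹) * ‖y‖| := by rw [abs_mul, abs_of_pos hb]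
          _ = |‖y‖ - 1| := by rw [sub_mul, one_mul, inv_mul_cancel₀ hb.ne']
      rw [h2, abs_of_nonpos (by linarith), neg_sub]
    have ha0 : (0:ℝ) < 1 - ‖x‖ := by linarith
    have hb0 : (0:ℝ) < 1 - ‖y‖ := by linarith
    have hbound : ∀ p : ↥(Metric.sphere (0 : EuclideanSpace ℝ (Fin 2)) 1),
        ‖x - y‖ / Real.sqrt (‖x - (p : EuclideanSpace ℝ (Fin 2))‖ * ‖y - (p : EuclideanSpace ℝ (Fin 2))‖)
          ≤ ‖x - y‖ / Real.sqrt ((1 - ‖x‖) * (1 - ‖y‖)) := by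
      rintro ⟨p, hp⟩
      have hpn : ‖p‖ = 1 := by simpa using hp
      have h1 : 1 - ‖x‖ ≤ ‖x - p‖ := by
        have := norm_sub_norm_le p x
        rw [hpn, norm_sub_rev] at this
        linarith
      have h2 : 1 - ‖y‖ ≤ ‖y - p‖ := by
        have := norm_sub_norm_le p y
        rw [hpn, norm_sub_rev] at this
        linarith
      have hsq : (0:ℝ) < Real.sqrt ((1 - ‖x‖) * (1 - ‖y‖)) :=
        Real.sqrt_pos.mpr (by positivity)
      exact div_le_div_of_nonneg_left (norm_nonneg _) hsq
        (Real.sqrt_le_sqrt (by nlinarith))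
    refine le_antisymm (ciSup_le hbound) ?_
    have hval : ‖x - y‖ / Real.sqrt ((1 - ‖x‖) * (1 - ‖y‖))
        = ‖x - y‖ / Real.sqrt (‖x - p₀‖ * ‖y - p₀‖) := by rw [hxp, hyp]
    rw [hval]
    exact le_ciSup ⟨_, by rintro _ ⟨p, rfl⟩; exact hbound p⟩ (⟨p₀, hp₀mem⟩ : ↥(Metric.sphere (0 : EuclideanSpace ℝ (Fin 2)) 1))
end

section
/- Let x, y ∈ 𝔹² with x = ty for some real t < 0 and |x| ≤ |y|. Then τ̃_{𝔹²}(x, y) = log(1 + |x-y| / √((1+|x|)(1-|y|))). -/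
/-!
Write `x = -a • u` and `y = b • u` with `‖u‖ = 1` and `0 ≤ a ≤ b < 1`. For a boundary point `p`
with `c = ⟪u, p⟫`, expanding the squared norms gives
`‖x - p‖² ‖y - p‖² - ((1 + a)(1 - b))² = (1 - c) (2 (b - a)(1 - a b) + 4 a b (1 + c)) ≥ 0`,
so `‖x - p‖ ‖y - p‖` is smallest at `p = u`, where it equals `(1 + a)(1 - b)`; the supremum
defining the Cassinian metric is therefore attained at `u`.
-/

open Metric

section InnerProductSpace

variable {E : Type*} [NormedAddCommGroup E] [InnerProductSpace ℝ E]

theorem mul_le_norm_neg_smul_sub_mul_norm_smul_sub {u p : E} (hu : ‖u‖ = 1) (hp : ‖p‖ = 1)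
    {a b : ℝ} (ha : 0 ≤ a) (hab : a ≤ b) :
    (1 + a) * (1 - b) ≤ ‖(-a) • u - p‖ * ‖b • u - p‖ := by
  rcases le_or_gt 1 b with hb | hb
  · exact (mul_nonpos_of_nonneg_of_nonpos (by linarith) (by linarith)).trans (by positivity)
  set c := inner ℝ u p
  obtain ⟨hc₁, hc₂⟩ : -1 ≤ c ∧ c ≤ 1 := abs_le.mp <| by
    simpa [hu, hp] using abs_real_inner_le_norm u p
  have hx : ‖(-a) • u - p‖ ^ 2 = a ^ 2 + 2 * a * c + 1 := by
    rw [norm_sub_sq_real, real_inner_smul_left, norm_smul, hu, hp, Real.norm_eq_abs, abs_neg,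
      abs_of_nonneg ha]
    ring
  have hy : ‖b • u - p‖ ^ 2 = b ^ 2 - 2 * b * c + 1 := by
    rw [norm_sub_sq_real, real_inner_smul_left, norm_smul, hu, hp, Real.norm_eq_abs,
      abs_of_nonneg (ha.trans hab)]
    ring
  rw [← pow_le_pow_iff_left₀ (by nlinarith) (by positivity) two_ne_zero, mul_pow, mul_pow, hx, hy,
    ← sub_nonneg]
  have h1ab : 0 ≤ 1 - a * b := by nlinarith
  have hab0 : 0 ≤ a * b := mul_nonneg ha (ha.trans hab)
  calc 0 ≤ (1 - c) * (2 * (b - a) * (1 - a * b) + 4 * (a * b) * (1 + c)) := by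
        apply mul_nonneg (by linarith)
        nlinarith [mul_nonneg (sub_nonneg.mpr hab) h1ab,
          mul_nonneg hab0 (neg_le_iff_add_nonneg'.mp hc₁)]
    _ = _ := by ring

theorem norm_neg_smul_sub_mul_norm_smul_sub_self {u : E} (hu : ‖u‖ = 1) {a b : ℝ}
    (ha : 0 ≤ a) (hb : b ≤ 1) :
    ‖(-a) • u - u‖ * ‖b • u - u‖ = (1 + a) * (1 - b) := by
  have hsub (r : ℝ) : r • u - u = (r - 1) • u := by rw [sub_smul, one_smul]
  rw [hsub, hsub, norm_smul, norm_smul, hu, Real.norm_eq_abs,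
    Real.norm_eq_abs, abs_of_nonpos (by linarith), abs_of_nonpos (by linarith)]
  ring

theorem exists_norm_eq_one_smul [Nontrivial E] (y : E) : ∃ u : E, ‖u‖ = 1 ∧ y = ‖y‖ • u := by
  rcases eq_or_ne y 0 with rfl | hy
  · obtain ⟨u, hu⟩ := exists_norm_eq E zero_le_one
    exact ⟨u, hu, by simp⟩
  · exact ⟨‖y‖⁻¹ • y, norm_smul_inv_norm hy, by
      rw [smul_smul, mul_inv_cancel₀ (norm_ne_zero_iff.mpr hy), one_smul]⟩

theorem scTau_ball_neg_smul_smul {u : E} (hu : ‖u‖ = 1) {a b : ℝ} (ha : 0 ≤ a) (hab : a ≤ b)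
    (hb : b < 1) :
    scTau (ball (0 : E) 1) ((-a) • u) (b • u)
      = Real.log (1 + ‖(-a) • u - b • u‖ / √((1 + a) * (1 - b))) := by
  have hpos : 0 < (1 + a) * (1 - b) := mul_pos (by linarith) (by linarith)
  have hmax : IsMaxOn (fun p : E ↦ ‖(-a) • u - b • u‖ / √(‖(-a) • u - p‖ * ‖b • u - p‖))
      (sphere 0 1) u := isMaxOn_iff.mpr fun p hp ↦ by
    rw [norm_neg_smul_sub_mul_norm_smul_sub_self hu ha hb.le]
    exact div_le_div_of_nonneg_left (norm_nonneg _) (Real.sqrt_pos.mpr hpos)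
      (Real.sqrt_le_sqrt <| mul_le_norm_neg_smul_sub_mul_norm_smul_sub hu
        (mem_sphere_zero_iff_norm.mp hp) ha hab)
  rw [scTau, frontier_ball 0 one_ne_zero,
    hmax.iSup_eq (mem_sphere_zero_iff_norm.mpr hu),
    norm_neg_smul_sub_mul_norm_smul_sub_self hu ha hb.le]

end InnerProductSpace

theorem stmt6_general (x y : EuclideanSpace ℝ (Fin 2))
    (hy : y ∈ Metric.ball (0 : EuclideanSpace ℝ (Fin 2)) 1)
    (t : ℝ) (ht : t < 0) (hxy : x = t • y) (hle : ‖x‖ ≤ ‖y‖) :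
    scTau (Metric.ball (0 : EuclideanSpace ℝ (Fin 2)) 1) x y
      = Real.log (1 + ‖x - y‖ / Real.sqrt ((1 + ‖x‖) * (1 - ‖y‖))) := by
  obtain ⟨u, hu, hyu⟩ := exists_norm_eq_one_smul y
  have hxu : x = (-‖x‖) • u := by
    rw [hxy, norm_smul, Real.norm_eq_abs, abs_of_neg ht, neg_mul, neg_neg, mul_smul, ← hyu]
  rw [hxu, hyu] at hle ⊢
  simp only [norm_smul, norm_neg, norm_norm, hu, mul_one] at hle ⊢
  exact scTau_ball_neg_smul_smul hu (norm_nonneg x) hle (mem_ball_zero_iff.mp hy)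

theorem stmt6 (x y : EuclideanSpace ℝ (Fin 2))
    (hx : x ∈ Metric.ball (0 : EuclideanSpace ℝ (Fin 2)) 1)
    (hy : y ∈ Metric.ball (0 : EuclideanSpace ℝ (Fin 2)) 1)
    (t : ℝ) (ht : t < 0) (hxy : x = t • y) (hle : ‖x‖ ≤ ‖y‖) :
    scTau (Metric.ball (0 : EuclideanSpace ℝ (Fin 2)) 1) x y
      = Real.log (1 + ‖x - y‖ / Real.sqrt ((1 + ‖x‖) * (1 - ‖y‖))) :=
  stmt6_general x y hy t ht hxy hle
end

section
/- For all x, y in the open unit disk 𝔹² with |x+y|(1 + 4/(|x+y|² + |x-y|²)) > 4, we have τ̃_{𝔹²}(x,y) ≥ log(1 + 2|x-y| / √((2 - |x+y|)² + |x-y|²)). -/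
/-!
Take the boundary point `p = (x + y) / |x + y|`. The parallelogram law for `x - p` and `y - p`
gives `|x - p|² + |y - p|² = ((2 - |x + y|)² + |x - y|²) / 2`, since `x + y - 2p` has norm
`|2 - |x + y||`. By AM-GM, `4 |x - p| |y - p| ≤ (2 - |x + y|)² + |x - y|²`, so the term of
the supremum at `p` is already at least the claimed bound.
-/

open Metric NormedSpace Set

theorem two_mul_div_sqrt_le_div_sqrt {a P S : ℝ} (ha : 0 ≤ a) (hP : 0 < P) (hPS : 4 * P ≤ S) :
    2 * a / √S ≤ a / √P := by
  have hsqrt : 2 * √P ≤ √S := by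
    rw [Real.le_sqrt (by positivity) (by linarith), mul_pow, Real.sq_sqrt hP.le]
    linarith
  rw [show 2 * a / √S = a / (√S / 2) by ring]
  exact div_le_div_of_nonneg_left ha (by positivity) (by linarith)

section Normed

variable {E : Type*} [NormedAddCommGroup E]

theorem log_one_add_le_scTau {D : Set E} {x y p : E} (hp : p ∈ frontier D)
    (hbdd : BddAbove (range fun q : frontier D => ‖x - y‖ / √(‖x - q‖ * ‖y - q‖))) :
    Real.log (1 + ‖x - y‖ / √(‖x - p‖ * ‖y - p‖)) ≤ scTau D x y :=
  Real.log_le_log (by positivity) (by gcongr; exact le_ciSup hbdd ⟨p, hp⟩)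

variable [NormedSpace ℝ E]

theorem norm_sub_smul_normalize {v : E} (hv : v ≠ 0) (t : ℝ) :
    ‖v - t • normalize v‖ = |‖v‖ - t| := by
  nth_rw 1 [← norm_smul_normalize v]
  rw [← sub_smul, norm_smul, norm_normalize hv, mul_one, Real.norm_eq_abs]

theorem bddAbove_cassinian_ball {c x y : E} {r : ℝ} (hx : x ∈ ball c r)
    (hy : y ∈ ball c r) :
    BddAbove (range fun q : frontier (ball c r) => ‖x - y‖ / √(‖x - q‖ * ‖y - q‖)) := by
  have hr : r ≠ 0 := (pos_of_mem_ball hx).ne'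
  have dist_bound (z : E) (q : frontier (ball c r)) : r - dist z c ≤ ‖z - q‖ := by
    have hq : dist (q : E) c = r := mem_sphere.mp (frontier_ball c hr ▸ q.2)
    rw [← dist_eq_norm]
    linarith [dist_triangle (q : E) z c, dist_comm (q : E) z]
  have hx' : 0 < r - dist x c := sub_pos.mpr (mem_ball.mp hx)
  have hy' : 0 < r - dist y c := sub_pos.mpr (mem_ball.mp hy)
  refine ⟨‖x - y‖ / √((r - dist x c) * (r - dist y c)), ?_⟩
  rintro _ ⟨q, rfl⟩
  dsimp only
  gcongr
  exacts [dist_bound x q, dist_bound y q]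

end Normed

section InnerProduct

variable {E : Type*} [NormedAddCommGroup E] [InnerProductSpace ℝ E]

theorem norm_sub_sq_add_norm_sub_sq (x y p : E) :
    ‖x - p‖ ^ 2 + ‖y - p‖ ^ 2 = (‖x + y - (2 : ℝ) • p‖ ^ 2 + ‖x - y‖ ^ 2) / 2 := by
  have h := parallelogram_law_with_norm ℝ (x - p) (y - p)
  rw [show x - p + (y - p) = x + y - (2 : ℝ) • p by module,
    show x - p - (y - p) = x - y by abel] at h
  linarith

theorem four_mul_norm_sub_normalize_mul_le {x y : E} (hxy : x + y ≠ 0) :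
    4 * (‖x - normalize (x + y)‖ * ‖y - normalize (x + y)‖)
      ≤ (2 - ‖x + y‖) ^ 2 + ‖x - y‖ ^ 2 := by
  have h := norm_sub_sq_add_norm_sub_sq x y (normalize (x + y))
  rw [norm_sub_smul_normalize hxy, sq_abs] at h
  nlinarith [sq_nonneg (‖x - normalize (x + y)‖ - ‖y - normalize (x + y)‖)]

theorem log_le_scTau_ball_of_add_ne_zero {x y : E} (hx : x ∈ ball 0 1) (hy : y ∈ ball 0 1)
    (hxy : x + y ≠ 0) :
    Real.log (1 + 2 * ‖x - y‖ / √((2 - ‖x + y‖) ^ 2 + ‖x - y‖ ^ 2))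
      ≤ scTau (ball 0 1) x y := by
  set p := normalize (x + y)
  have hp : p ∈ sphere 0 1 := mem_sphere_zero_iff_norm.mpr (norm_normalize hxy)
  have dist_pos {z : E} (hz : z ∈ ball 0 1) : 0 < ‖z - p‖ :=
    norm_pos_iff.mpr <| sub_ne_zero.mpr <|
      ne_of_mem_of_not_mem hz (sphere_disjoint_ball.notMem_of_mem_left hp)
  calc Real.log (1 + 2 * ‖x - y‖ / √((2 - ‖x + y‖) ^ 2 + ‖x - y‖ ^ 2))
      ≤ Real.log (1 + ‖x - y‖ / √(‖x - p‖ * ‖y - p‖)) := by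
        refine Real.log_le_log (by positivity) (add_le_add_right ?_ 1)
        exact two_mul_div_sqrt_le_div_sqrt (norm_nonneg _) (mul_pos (dist_pos hx) (dist_pos hy))
          (four_mul_norm_sub_normalize_mul_le hxy)
    _ ≤ scTau (ball 0 1) x y :=
        log_one_add_le_scTau (frontier_ball (0 : E) one_ne_zero ▸ hp)
          (bddAbove_cassinian_ball hx hy)

end InnerProduct

theorem stmt8 (x y : EuclideanSpace ℝ (Fin 2))
    (hx : x ∈ Metric.ball (0 : EuclideanSpace ℝ (Fin 2)) 1)
    (hy : y ∈ Metric.ball (0 : EuclideanSpace ℝ (Fin 2)) 1)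
    (h : ‖x + y‖ * (1 + 4 / (‖x + y‖ ^ 2 + ‖x - y‖ ^ 2)) > 4) :
    scTau (Metric.ball (0 : EuclideanSpace ℝ (Fin 2)) 1) x y
      ≥ Real.log (1 + 2 * ‖x - y‖ / Real.sqrt ((2 - ‖x + y‖) ^ 2 + ‖x - y‖ ^ 2)) := by
  have hxy : x + y ≠ 0 := by
    rintro hxy
    norm_num [hxy] at h
  exact log_le_scTau_ball_of_add_ne_zero hx hy hxy
end

section
/- For all x, y in the open unit disk 𝔹² with |x+y| + |x-y| < 2, we have τ̃_{𝔹²}(x,y) ≤ log(1 + 2|x-y| / √((2 - |x+y|)² - |x-y|²)). -/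
theorem stmt9 (x y : EuclideanSpace ℝ (Fin 2))
    (hx : x ∈ Metric.ball (0 : EuclideanSpace ℝ (Fin 2)) 1)
    (hy : y ∈ Metric.ball (0 : EuclideanSpace ℝ (Fin 2)) 1)
    (h : ‖x + y‖ + ‖x - y‖ < 2) :
    scTau (Metric.ball (0 : EuclideanSpace ℝ (Fin 2)) 1) x y
      ≤ Real.log (1 + 2 * ‖x - y‖ / Real.sqrt ((2 - ‖x + y‖) ^ 2 - ‖x - y‖ ^ 2)) := by
  have hd0 : (0:ℝ) ≤ ‖x - y‖ := norm_nonneg _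
  have hs0 : (0:ℝ) ≤ ‖x + y‖ := norm_nonneg _
  have hW : 0 < (2 - ‖x + y‖) ^ 2 - ‖x - y‖ ^ 2 := by nlinarith
  have hWs : 0 < Real.sqrt ((2 - ‖x + y‖) ^ 2 - ‖x - y‖ ^ 2) := Real.sqrt_pos.mpr hW
  have hfr : frontier (Metric.ball (0 : EuclideanSpace ℝ (Fin 2)) 1)
      = Metric.sphere 0 1 := frontier_ball 0 one_ne_zero
  have key : ∀ p : frontier (Metric.ball (0 : EuclideanSpace ℝ (Fin 2)) 1),
      ‖x - y‖ / Real.sqrt (‖x - (p : EuclideanSpace ℝ (Fin 2))‖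
          * ‖y - (p : EuclideanSpace ℝ (Fin 2))‖)
        ≤ 2 * ‖x - y‖ / Real.sqrt ((2 - ‖x + y‖) ^ 2 - ‖x - y‖ ^ 2) := by
    rintro ⟨p, hp⟩
    have hpn : ‖p‖ = 1 := by
      have := hfr ▸ hp
      simpa using this
    have hxn : ‖x‖ < 1 := by simpa using hx
    have hyn : ‖y‖ < 1 := by simpa using hy
    have ha : 0 < ‖x - p‖ := by
      have h1 : ‖p‖ - ‖x‖ ≤ ‖p - x‖ := norm_sub_norm_le p x
      rw [norm_sub_rev] at h1
      linarith
    have hb : 0 < ‖y - p‖ := by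
      have h1 : ‖p‖ - ‖y‖ ≤ ‖p - y‖ := norm_sub_norm_le p y
      rw [norm_sub_rev] at h1
      linarith
    have hpp : ‖p + p‖ = 2 := by
      have : p + p = (2:ℝ) • p := (two_smul ℝ p).symm
      rw [this, norm_smul, hpn]
      norm_num
    have h1 : 2 - ‖x + y‖ ≤ ‖x - p‖ + ‖y - p‖ := by
      have e1 : (x - p) + (y - p) = (x + y) - (p + p) := by abel
      have e2 : ‖p + p‖ - ‖x + y‖ ≤ ‖(p + p) - (x + y)‖ := norm_sub_norm_le _ _
      have e3 : ‖(p + p) - (x + y)‖ ≤ ‖x - p‖ + ‖y - p‖ := by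
        rw [norm_sub_rev, ← e1]; exact norm_add_le _ _
      linarith [hpp ▸ e2]
    have h2 : |‖x - p‖ - ‖y - p‖| ≤ ‖x - y‖ := by
      have := abs_norm_sub_norm_le (x - p) (y - p)
      have e : (x - p) - (y - p) = x - y := by abel
      rwa [e] at this
    have h2' : (‖x - p‖ - ‖y - p‖) ^ 2 ≤ ‖x - y‖ ^ 2 := by
      rcases abs_le.mp h2 with ⟨hl, hr⟩
      nlinarith
    have hab : (2 - ‖x + y‖) ^ 2 - ‖x - y‖ ^ 2 ≤ 4 * (‖x - p‖ * ‖y - p‖) := by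
      have hs2 : (0:ℝ) ≤ 2 - ‖x + y‖ := by nlinarith
      nlinarith
    have habpos : 0 < ‖x - p‖ * ‖y - p‖ := mul_pos ha hb
    have hsqrt : Real.sqrt ((2 - ‖x + y‖) ^ 2 - ‖x - y‖ ^ 2)
        ≤ 2 * Real.sqrt (‖x - p‖ * ‖y - p‖) := by
      have e4 : (4:ℝ) * (‖x - p‖ * ‖y - p‖) = 2 ^ 2 * (‖x - p‖ * ‖y - p‖) := by ring
      have := Real.sqrt_le_sqrt hab
      rwa [e4, Real.sqrt_mul (by norm_num : (0:ℝ) ≤ 2 ^ 2),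
        Real.sqrt_sq (by norm_num : (0:ℝ) ≤ 2)] at this
    rw [div_le_div_iff₀ (Real.sqrt_pos.mpr habpos) hWs]
    have := mul_le_mul_of_nonneg_left hsqrt hd0
    nlinarith [Real.sqrt_nonneg (‖x - p‖ * ‖y - p‖)]
  unfold scTau
  have hsup : (⨆ p : frontier (Metric.ball (0 : EuclideanSpace ℝ (Fin 2)) 1),
      ‖x - y‖ / Real.sqrt (‖x - (p : EuclideanSpace ℝ (Fin 2))‖
          * ‖y - (p : EuclideanSpace ℝ (Fin 2))‖))
        ≤ 2 * ‖x - y‖ / Real.sqrt ((2 - ‖x + y‖) ^ 2 - ‖x - y‖ ^ 2) := by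
    have hne : Nonempty (frontier (Metric.ball (0 : EuclideanSpace ℝ (Fin 2)) 1)) := by
      rw [hfr]
      exact (NormedSpace.sphere_nonempty.mpr zero_le_one).to_subtype
    exact ciSup_le key
  have hsupnn : 0 ≤ ⨆ p : frontier (Metric.ball (0 : EuclideanSpace ℝ (Fin 2)) 1),
      ‖x - y‖ / Real.sqrt (‖x - (p : EuclideanSpace ℝ (Fin 2))‖
          * ‖y - (p : EuclideanSpace ℝ (Fin 2))‖) :=
    Real.iSup_nonneg fun p => div_nonneg hd0 (Real.sqrt_nonneg _)
  exact Real.log_le_log (by linarith) (by linarith)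
end

section
/- For real numbers 0 ≤ t < 2 and 0 ≤ s < 2 with t² + s² < 4 and t(1 + 4/(t²+s²)) ≤ 4 (interpreting the condition as true when t = s = 0), one has 2√(s√(s²+t²)/(4 - s² - t²)) ≥ 2s/√(4 - s²); moreover if t(1 + 4/(t²+s²)) > 4 then (2-t)² + s² ≤ 4 - s², so that 2s/√((2-t)² + s²) ≥ 2s/√(4 - s²). -/
/-- the lower bounds of Theorem 3.7 improve log(1+2s/√(4-s²)). -/
theorem stmt10 (t s : ℝ) (ht0 : 0 ≤ t) (ht2 : t < 2) (hs0 : 0 ≤ s) (hs2 : s < 2)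
    (hts : t ^ 2 + s ^ 2 < 4) :
    (t * (1 + 4 / (t ^ 2 + s ^ 2)) ≤ 4 →
      2 * Real.sqrt (s * Real.sqrt (s ^ 2 + t ^ 2) / (4 - s ^ 2 - t ^ 2))
        ≥ 2 * s / Real.sqrt (4 - s ^ 2)) ∧
    (t * (1 + 4 / (t ^ 2 + s ^ 2)) > 4 →
      (2 - t) ^ 2 + s ^ 2 ≤ 4 - s ^ 2 ∧
      2 * s / Real.sqrt ((2 - t) ^ 2 + s ^ 2) ≥ 2 * s / Real.sqrt (4 - s ^ 2)) := by
  have h4s : 0 < 4 - s ^ 2 := by nlinarith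
  have h4st : 0 < 4 - s ^ 2 - t ^ 2 := by nlinarith
  constructor
  · intro _
    set r := Real.sqrt (s ^ 2 + t ^ 2) with hrdef
    have hr0 : 0 ≤ r := Real.sqrt_nonneg _
    have hr2 : r ^ 2 = s ^ 2 + t ^ 2 := Real.sq_sqrt (by positivity)
    have hrs : s ≤ r := by nlinarith
    have key : s ^ 2 / (4 - s ^ 2) ≤ s * r / (4 - s ^ 2 - t ^ 2) := by
      rw [div_le_div_iff₀ h4s h4st]
      nlinarith [mul_nonneg hs0 (sub_nonneg.mpr hrs),
        mul_nonneg (mul_nonneg hs0 hr0) (mul_nonneg hs0 (sub_nonneg.mpr hrs))]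
    have h1 : 2 * s / Real.sqrt (4 - s ^ 2) = 2 * Real.sqrt (s ^ 2 / (4 - s ^ 2)) := by
      rw [Real.sqrt_div (by positivity), Real.sqrt_sq hs0, mul_div_assoc]
    rw [ge_iff_le, h1]
    have := Real.sqrt_le_sqrt key
    linarith
  · intro h
    have ht0' : 0 < t := by
      rcases ht0.lt_or_eq with h' | h'
      · exact h'
      · exfalso; rw [← h'] at h; simp at h; linarith
    have hst0 : 0 < t ^ 2 + s ^ 2 := by positivity
    have key : t * (t ^ 2 + s ^ 2) + 4 * t > 4 * (t ^ 2 + s ^ 2) := by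
      have := h
      rw [gt_iff_lt, ← sub_pos] at this
      have h2 : t * (1 + 4 / (t ^ 2 + s ^ 2)) - 4
          = (t * (t ^ 2 + s ^ 2) + 4 * t - 4 * (t ^ 2 + s ^ 2)) / (t ^ 2 + s ^ 2) := by
        field_simp
      rw [h2, div_pos_iff] at this
      rcases this with ⟨a, _⟩ | ⟨_, b⟩
      · linarith
      · linarith
    -- from key: t*(2-t)^2 > s^2*(4-t)
    have h1 : s ^ 2 * (4 - t) < t * (2 - t) ^ 2 := by nlinarith
    have h2 : 2 * (2 - t) ^ 2 ≤ (4 - t) ^ 2 := by nlinarith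
    have hgoal1 : (2 - t) ^ 2 + s ^ 2 ≤ 4 - s ^ 2 := by
      nlinarith [mul_le_mul_of_nonneg_left h2 ht0, mul_pos (by linarith : (0:ℝ) < 4 - t)
        (by nlinarith : (0:ℝ) < 4 - t)]
    refine ⟨hgoal1, ?_⟩
    have hposd : (0:ℝ) < (2 - t) ^ 2 + s ^ 2 := by nlinarith
    have hpos : 0 < Real.sqrt ((2 - t) ^ 2 + s ^ 2) := Real.sqrt_pos.mpr hposd
    have hle : Real.sqrt ((2 - t) ^ 2 + s ^ 2) ≤ Real.sqrt (4 - s ^ 2) :=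
      Real.sqrt_le_sqrt hgoal1
    exact div_le_div_of_nonneg_left (by linarith) hpos hle
end

section
/- Let x, y ∈ ℍ² = {(z₁,z₂) ∈ ℝ² : z₂ > 0} with x₂ = y₂ = d (equal distances to the boundary ∂ℍ² = ℝ × {0}) and |x - y| > 2d. Then τ̃_{ℍ²}(x, y) = log(1 + √(|x-y|/d)). -/
open Real Set

lemma euc_norm_two (u : EuclideanSpace ℝ (Fin 2)) :
    ‖u‖ = Real.sqrt ((u 0) ^ 2 + (u 1) ^ 2) := by
  rw [EuclideanSpace.norm_eq]
  simp [Fin.sum_univ_two, Real.norm_eq_abs, sq_abs]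

lemma frontier_halfplane :
    frontier {z : EuclideanSpace ℝ (Fin 2) | z 1 > 0}
      = {z : EuclideanSpace ℝ (Fin 2) | z 1 = 0} := by
  have hsurj : Function.Surjective (EuclideanSpace.proj (𝕜 := ℝ) (1 : Fin 2)) := by
    intro t
    exact ⟨EuclideanSpace.single 1 t, by simp⟩
  have h1 : {z : EuclideanSpace ℝ (Fin 2) | z 1 > 0}
      = (EuclideanSpace.proj (𝕜 := ℝ) (1 : Fin 2)) ⁻¹' (Set.Ioi 0) := rfl
  rw [h1, ContinuousLinearMap.frontier_preimage _ hsurj, frontier_Ioi]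
  ext z
  simp [EuclideanSpace.proj]

theorem stmt11 (x y : EuclideanSpace ℝ (Fin 2)) (d : ℝ)
    (hx : x ∈ {z : EuclideanSpace ℝ (Fin 2) | z 1 > 0})
    (hy : y ∈ {z : EuclideanSpace ℝ (Fin 2) | z 1 > 0})
    (hxd : x 1 = d) (hyd : y 1 = d) (h : ‖x - y‖ > 2 * d) :
    scTau {z : EuclideanSpace ℝ (Fin 2) | z 1 > 0} x y
      = Real.log (1 + Real.sqrt (‖x - y‖ / d)) := by
  have hd : 0 < d := by rw [← hxd]; exact hx
  set s := ‖x - y‖ with hs_def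
  have hs : s = |x 0 - y 0| := by
    rw [hs_def, euc_norm_two]
    simp only [PiLp.sub_apply, hxd, hyd, sub_self]
    rw [zero_pow two_ne_zero, add_zero, Real.sqrt_sq_eq_abs]
  have hs_pos : 0 < s := lt_trans (by positivity) h
  -- key: squared product lower bound for any boundary point
  have hnormsq : ∀ p : EuclideanSpace ℝ (Fin 2), p 1 = 0 →
      ‖x - p‖ ^ 2 = (x 0 - p 0) ^ 2 + d ^ 2 ∧ ‖y - p‖ ^ 2 = (y 0 - p 0) ^ 2 + d ^ 2 := by
    intro p hp
    constructor <;>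
    · rw [euc_norm_two, Real.sq_sqrt (by positivity)]
      simp [PiLp.sub_apply, hxd, hyd, hp]
  have key : ∀ p : EuclideanSpace ℝ (Fin 2), p 1 = 0 → s * d ≤ ‖x - p‖ * ‖y - p‖ := by
    intro p hp
    obtain ⟨h1, h2⟩ := hnormsq p hp
    have hprod : (s * d) ^ 2 ≤ (‖x - p‖ * ‖y - p‖) ^ 2 := by
      rw [mul_pow, mul_pow, h1, h2, hs, sq_abs]
      nlinarith [sq_nonneg ((x 0 - p 0) * (y 0 - p 0) + d ^ 2)]
    exact le_of_pow_le_pow_left₀ two_ne_zero (by positivity) hprod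
  have sdiv_eq : s / Real.sqrt (s * d) = Real.sqrt (s / d) := by
    rw [Real.sqrt_div hs_pos.le, Real.sqrt_mul hs_pos.le]
    nth_rewrite 1 [← Real.mul_self_sqrt hs_pos.le]
    rw [mul_div_mul_left _ _ (by positivity : Real.sqrt s ≠ 0)]
  have hub : ∀ p : EuclideanSpace ℝ (Fin 2), p 1 = 0 →
      s / Real.sqrt (‖x - p‖ * ‖y - p‖) ≤ Real.sqrt (s / d) := by
    intro p hp
    have h2 : Real.sqrt (s * d) ≤ Real.sqrt (‖x - p‖ * ‖y - p‖) :=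
      Real.sqrt_le_sqrt (key p hp)
    calc s / Real.sqrt (‖x - p‖ * ‖y - p‖) ≤ s / Real.sqrt (s * d) :=
          div_le_div_of_nonneg_left hs_pos.le (by positivity) h2
      _ = Real.sqrt (s / d) := sdiv_eq
  -- the extremal boundary point
  have h4 : 0 ≤ (x 0 - y 0) ^ 2 / 4 - d ^ 2 := by
    have : 2 * d < |x 0 - y 0| := hs ▸ h
    nlinarith [abs_nonneg (x 0 - y 0), sq_abs (x 0 - y 0)]
  set u := Real.sqrt ((x 0 - y 0) ^ 2 / 4 - d ^ 2) with hu_def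
  have hu2 : u ^ 2 = (x 0 - y 0) ^ 2 / 4 - d ^ 2 := Real.sq_sqrt h4
  set p₀ : EuclideanSpace ℝ (Fin 2) :=
    (WithLp.equiv 2 (Fin 2 → ℝ)).symm ![(x 0 + y 0) / 2 + u, 0] with hp₀_def
  have hp00 : p₀ 0 = (x 0 + y 0) / 2 + u := rfl
  have hp01 : p₀ 1 = 0 := rfl
  have heq : ‖x - p₀‖ * ‖y - p₀‖ = s * d := by
    obtain ⟨h1, h2⟩ := hnormsq p₀ hp01
    have hsq : (‖x - p₀‖ * ‖y - p₀‖) ^ 2 = (s * d) ^ 2 := by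
      rw [mul_pow, mul_pow, h1, h2, hs, sq_abs, hp00]
      linear_combination (u ^ 2 - ((x 0 - y 0) ^ 2 / 4 - d ^ 2)) * hu2
    have := congrArg Real.sqrt hsq
    rwa [Real.sqrt_sq (by positivity), Real.sqrt_sq (by positivity)] at this
  have hterm : s / Real.sqrt (‖x - p₀‖ * ‖y - p₀‖) = Real.sqrt (s / d) := by
    rw [heq, sdiv_eq]
  set D := {z : EuclideanSpace ℝ (Fin 2) | z 1 > 0} with hD
  have hfr : frontier D = {z : EuclideanSpace ℝ (Fin 2) | z 1 = 0} := frontier_halfplane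
  have hp₀mem : p₀ ∈ frontier D := by rw [hfr]; exact hp01
  haveI : Nonempty ↥(frontier D) := ⟨⟨p₀, hp₀mem⟩⟩
  have hbdd : BddAbove (Set.range fun p : frontier D =>
      s / Real.sqrt (‖x - (p : EuclideanSpace ℝ (Fin 2))‖ * ‖y - (p : EuclideanSpace ℝ (Fin 2))‖)) := by
    refine ⟨Real.sqrt (s / d), ?_⟩
    rintro _ ⟨⟨p, hp⟩, rfl⟩
    exact hub p (by rwa [hfr] at hp)
  have hsup : (⨆ p : frontier D,
      s / Real.sqrt (‖x - (p : EuclideanSpace ℝ (Fin 2))‖ * ‖y - (p : EuclideanSpace ℝ (Fin 2))‖))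
      = Real.sqrt (s / d) := by
    refine le_antisymm (ciSup_le ?_) ?_
    · rintro ⟨p, hp⟩
      exact hub p (by rwa [hfr] at hp)
    · exact le_ciSup_of_le hbdd ⟨p₀, hp₀mem⟩ (le_of_eq hterm.symm)
  rw [scTau, hsup]
end

section
/- Let x, y ∈ ℍ² = {(z₁,z₂) ∈ ℝ² : z₂ > 0} with x₂ = y₂ = d and |x - y| ≤ 2d. Then τ̃_{ℍ²}(x, y) = log(1 + 2|x-y| / √(4d² + |x-y|²)). -/
theorem stmt12 (x y : EuclideanSpace ℝ (Fin 2)) (d : ℝ)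
    (hx : x ∈ {z : EuclideanSpace ℝ (Fin 2) | z 1 > 0})
    (hy : y ∈ {z : EuclideanSpace ℝ (Fin 2) | z 1 > 0})
    (hxd : x 1 = d) (hyd : y 1 = d) (h : ‖x - y‖ ≤ 2 * d) :
    scTau {z : EuclideanSpace ℝ (Fin 2) | z 1 > 0} x y
      = Real.log (1 + 2 * ‖x - y‖ / Real.sqrt (4 * d ^ 2 + ‖x - y‖ ^ 2)) := by
  have hd : 0 < d := hxd ▸ hx
  have hnorm : ∀ v : EuclideanSpace ℝ (Fin 2), ‖v‖ = Real.sqrt (v 0 ^ 2 + v 1 ^ 2) := by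
    intro v
    rw [EuclideanSpace.norm_eq, Fin.sum_univ_two]
    simp [sq_abs]
  have hsub : ∀ (u w : EuclideanSpace ℝ (Fin 2)) (i : Fin 2), (u - w) i = u i - w i :=
    fun _ _ _ => rfl
  set a := x 0 with ha
  set b := y 0 with hb
  set t := ‖x - y‖ with ht
  have htnn : 0 ≤ t := norm_nonneg _
  have ht2 : t ^ 2 = (a - b) ^ 2 := by
    rw [ht, hnorm, hsub, hsub, hxd, hyd]
    rw [Real.sq_sqrt (by positivity)]
    ring
  -- frontier
  have hfr : frontier {z : EuclideanSpace ℝ (Fin 2) | z 1 > 0}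
      = {z : EuclideanSpace ℝ (Fin 2) | z 1 = 0} := by
    set f : EuclideanSpace ℝ (Fin 2) →L[ℝ] ℝ := EuclideanSpace.proj 1 with hf
    have hsurj : Function.Surjective f := fun c => ⟨EuclideanSpace.single 1 c, by simp [hf]⟩
    have h1 : {z : EuclideanSpace ℝ (Fin 2) | z 1 > 0} = f ⁻¹' (Set.Ioi 0) := rfl
    rw [h1, ContinuousLinearMap.frontier_preimage _ hsurj, frontier_Ioi]
    rfl
  -- midpoint
  set p₀ : EuclideanSpace ℝ (Fin 2) := (WithLp.equiv 2 (Fin 2 → ℝ)).symm ![(a+b)/2, 0] with hp₀def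
  have hp₀1 : p₀ 1 = 0 := rfl
  have hp₀0 : p₀ 0 = (a+b)/2 := rfl
  have hp₀ : p₀ ∈ frontier {z : EuclideanSpace ℝ (Fin 2) | z 1 > 0} := by
    rw [hfr]; exact hp₀1
  set c := d ^ 2 + t ^ 2 / 4 with hc
  have hcpos : 0 < c := by positivity
  have hxnorm : ∀ p : EuclideanSpace ℝ (Fin 2), p 1 = 0 →
      ‖x - p‖ = Real.sqrt ((a - p 0) ^ 2 + d ^ 2) := by
    intro p hp
    rw [hnorm, hsub, hsub, hxd, hp, ← ha]
    ring_nf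
  have hynorm : ∀ p : EuclideanSpace ℝ (Fin 2), p 1 = 0 →
      ‖y - p‖ = Real.sqrt ((b - p 0) ^ 2 + d ^ 2) := by
    intro p hp
    rw [hnorm, hsub, hsub, hyd, hp, ← hb]
    ring_nf
  have hgp₀ : ‖x - p₀‖ * ‖y - p₀‖ = c := by
    rw [hxnorm p₀ hp₀1, hynorm p₀ hp₀1, hp₀0,
      show a - (a+b)/2 = (a-b)/2 by ring, show b - (a+b)/2 = -((a-b)/2) by ring, neg_sq,
      Real.mul_self_sqrt (by positivity), hc, ht2]
    ring
  have hT : (a - b) ^ 2 ≤ 4 * d ^ 2 := by nlinarith [ht2, htnn, h]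
  have hbound : ∀ p : EuclideanSpace ℝ (Fin 2), p 1 = 0 → c ≤ ‖x - p‖ * ‖y - p‖ := by
    intro p hp
    rw [hxnorm p hp, hynorm p hp, ← Real.sqrt_mul (by positivity),
      show c = Real.sqrt (c ^ 2) from (Real.sqrt_sq hcpos.le).symm]
    apply Real.sqrt_le_sqrt
    rw [hc, ht2]
    set s := p 0
    nlinarith [sq_nonneg (a + b - 2*s), mul_nonneg (sub_nonneg.2 hT) (sq_nonneg (a + b - 2*s)),
      sq_nonneg ((a + b - 2*s) ^ 2)]
  haveI : Nonempty ↥(frontier {z : EuclideanSpace ℝ (Fin 2) | z 1 > 0}) := ⟨⟨p₀, hp₀⟩⟩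
  have hgle : ∀ p : ↥(frontier {z : EuclideanSpace ℝ (Fin 2) | z 1 > 0}),
      t / Real.sqrt (‖x - (p : EuclideanSpace ℝ (Fin 2))‖ * ‖y - (p : EuclideanSpace ℝ (Fin 2))‖)
        ≤ t / Real.sqrt c := by
    rintro ⟨p, hp⟩
    have hp1 : p 1 = 0 := by rwa [hfr] at hp
    have h1 : Real.sqrt c ≤ Real.sqrt (‖x - p‖ * ‖y - p‖) := Real.sqrt_le_sqrt (hbound p hp1)
    have h2 : 0 < Real.sqrt c := Real.sqrt_pos.2 hcpos
    exact div_le_div_of_nonneg_left htnn h2 h1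
  have hsup : (⨆ p : ↥(frontier {z : EuclideanSpace ℝ (Fin 2) | z 1 > 0}),
      t / Real.sqrt (‖x - (p : EuclideanSpace ℝ (Fin 2))‖ * ‖y - (p : EuclideanSpace ℝ (Fin 2))‖))
        = t / Real.sqrt c := by
    apply le_antisymm
    · exact ciSup_le hgle
    · have hb : BddAbove (Set.range fun p : ↥(frontier {z : EuclideanSpace ℝ (Fin 2) | z 1 > 0}) =>
          t / Real.sqrt (‖x - (p : EuclideanSpace ℝ (Fin 2))‖ * ‖y - (p : EuclideanSpace ℝ (Fin 2))‖)) :=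
        ⟨t / Real.sqrt c, fun r hr => by obtain ⟨i, rfl⟩ := hr; exact hgle i⟩
      have := le_ciSup hb ⟨p₀, hp₀⟩
      simpa [hgp₀] using this
  unfold scTau
  rw [← ht, hsup]
  congr 2
  have h4 : Real.sqrt (4 * d ^ 2 + t ^ 2) = 2 * Real.sqrt c := by
    rw [show 4 * d ^ 2 + t ^ 2 = 2 ^ 2 * c by rw [hc]; ring,
      Real.sqrt_mul (by positivity), Real.sqrt_sq (by norm_num)]
  rw [h4]
  exact (mul_div_mul_left _ _ two_ne_zero).symm
end

section
/- Let x, y ∈ ℍ² with x₁ = y₁ (i.e., y - x orthogonal to the boundary line ℝ × {0}). Then τ̃_{ℍ²}(x, y) = log(1 + |x-y| / √(x₂ y₂)). -/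
/-! The supremum defining `τ̃_D(x, y)` is attained at a boundary point nearest to both `x` and `y`,
since each quotient only grows as `|x - p|` and `|y - p|` shrink. In the upper half-plane the
foot of the common vertical line through `x` and `y` is such a point, at distances `x₂` and `y₂`. -/

theorem scTau_eq_of_isMinOn {E : Type*} [NormedAddCommGroup E] {D : Set E} {x y p₀ : E}
    (hp₀ : p₀ ∈ frontier D) (hx : IsMinOn (fun p => ‖x - p‖) (frontier D) p₀)
    (hy : IsMinOn (fun p => ‖y - p‖) (frontier D) p₀) (hpos : 0 < ‖x - p₀‖ * ‖y - p₀‖) :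
    scTau D x y = Real.log (1 + ‖x - y‖ / Real.sqrt (‖x - p₀‖ * ‖y - p₀‖)) := by
  have : Nonempty (frontier D) := ⟨⟨p₀, hp₀⟩⟩
  have hle : ∀ p : frontier D, ‖x - y‖ / Real.sqrt (‖x - (p : E)‖ * ‖y - (p : E)‖)
      ≤ ‖x - y‖ / Real.sqrt (‖x - p₀‖ * ‖y - p₀‖) := fun p =>
    div_le_div_of_nonneg_left (norm_nonneg _) (Real.sqrt_pos.2 hpos) <| Real.sqrt_le_sqrt <|
      mul_le_mul (isMinOn_iff.1 hx p p.2) (isMinOn_iff.1 hy p p.2) (norm_nonneg _) (norm_nonneg _)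
  rw [scTau, le_antisymm (ciSup_le hle) (le_ciSup_of_le ⟨_, Set.forall_mem_range.2 hle⟩
    ⟨p₀, hp₀⟩ le_rfl)]

theorem EuclideanSpace.frontier_setOf_apply_pos {ι : Type*} [Fintype ι] (i : ι) :
    frontier {z : EuclideanSpace ℝ ι | 0 < z i} = {z | z i = 0} := by
  have := (PiLp.isOpenMap_apply 2 (fun _ : ι => ℝ) i).preimage_frontier_eq_frontier_preimage
    (PiLp.continuous_apply 2 _ i) (Set.Ioi 0)
  rw [frontier_Ioi] at this
  exact this.symm

noncomputable def foot (z : EuclideanSpace ℝ (Fin 2)) : EuclideanSpace ℝ (Fin 2) :=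
  WithLp.toLp 2 ![z 0, 0]

theorem norm_sub_foot (z : EuclideanSpace ℝ (Fin 2)) : ‖z - foot z‖ = |z 1| := by
  simp [EuclideanSpace.norm_eq, Fin.sum_univ_two, foot, Real.sqrt_sq_eq_abs]

theorem EuclideanSpace.apply_le_norm_sub_of_apply_eq_zero {ι : Type*} [Fintype ι]
    {z p : EuclideanSpace ℝ ι} {i : ι} (hp : p i = 0) : z i ≤ ‖z - p‖ := by
  simpa [hp] using (le_abs_self _).trans (PiLp.norm_apply_le (z - p) i)

theorem isMinOn_norm_sub_foot {z : EuclideanSpace ℝ (Fin 2)} (hz : 0 < z 1) :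
    IsMinOn (fun p => ‖z - p‖) {p | p 1 = 0} (foot z) :=
  isMinOn_iff.2 fun _ hp => by
    rw [norm_sub_foot, abs_of_pos hz]
    exact EuclideanSpace.apply_le_norm_sub_of_apply_eq_zero hp

theorem stmt13 (x y : EuclideanSpace ℝ (Fin 2))
    (hx : x ∈ {z : EuclideanSpace ℝ (Fin 2) | z 1 > 0})
    (hy : y ∈ {z : EuclideanSpace ℝ (Fin 2) | z 1 > 0})
    (h : x 0 = y 0) :
    scTau {z : EuclideanSpace ℝ (Fin 2) | z 1 > 0} x y
      = Real.log (1 + ‖x - y‖ / Real.sqrt (x 1 * y 1)) := by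
  have hx₁ : 0 < x 1 := hx
  have hy₁ : 0 < y 1 := hy
  have hfoot : foot y = foot x := by simp [foot, h]
  have hfrontier : frontier {z : EuclideanSpace ℝ (Fin 2) | z 1 > 0} = {z | z 1 = 0} :=
    EuclideanSpace.frontier_setOf_apply_pos 1
  have hxfoot : ‖x - foot x‖ = x 1 := by rw [norm_sub_foot, abs_of_pos hx₁]
  have hyfoot : ‖y - foot x‖ = y 1 := by rw [← hfoot, norm_sub_foot, abs_of_pos hy₁]
  rw [scTau_eq_of_isMinOn (p₀ := foot x), hxfoot, hyfoot]
  · rw [hfrontier]; rfl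
  · rw [hfrontier]; exact isMinOn_norm_sub_foot hx₁
  · rw [hfrontier, ← hfoot]; exact isMinOn_norm_sub_foot hy₁
  · rw [hxfoot, hyfoot]; positivity
end

section
/- For all x, y ∈ ℍ² with d := (x₂ + y₂)/2 (the distance of the midpoint (x+y)/2 to ∂ℍ²): if |x - y| > 2d then τ̃_{ℍ²}(x,y) ≥ log(1 + √(|x-y|/d)), and if |x - y| ≤ 2d then τ̃_{ℍ²}(x,y) ≥ log(1 + 2|x-y|/√(4d² + |x-y|²)). -/
open Set

theorem log_one_add_le_scTau_s14 {E : Type*} [NormedAddCommGroup E] {D : Set E} {x y p : E}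
    {δ : ℝ} (hδ : 0 < δ) (hfront : ∀ p ∈ frontier D, δ ≤ ‖x - p‖ * ‖y - p‖)
    (hp : p ∈ frontier D) {T : ℝ} (hT : 0 ≤ T) (hTp : T * √(‖x - p‖ * ‖y - p‖) ≤ ‖x - y‖) :
    Real.log (1 + T) ≤ scTau D x y := by
  have hbdd : BddAbove (range fun p : frontier D =>
      ‖x - y‖ / √(‖x - (p : E)‖ * ‖y - (p : E)‖)) := by
    refine ⟨‖x - y‖ / √δ, ?_⟩
    rintro _ ⟨⟨p, hp⟩, rfl⟩
    exact div_le_div_of_nonneg_left (norm_nonneg _) (Real.sqrt_pos.2 hδ)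
      (Real.sqrt_le_sqrt (hfront p hp))
  have hTle : T ≤ ‖x - y‖ / √(‖x - p‖ * ‖y - p‖) :=
    (le_div_iff₀ (Real.sqrt_pos.2 (hδ.trans_le (hfront p hp)))).2 hTp
  exact Real.log_le_log (by linarith) (by linarith [hTle.trans (le_ciSup hbdd ⟨p, hp⟩)])

theorem frontier_setOf_coord_pos {ι : Type*} [Fintype ι] (i : ι) :
    frontier {z : EuclideanSpace ℝ ι | z i > 0} = {z | z i = 0} := by
  have hopen : IsOpenMap (EuclideanSpace.proj i : EuclideanSpace ℝ ι →L[ℝ] ℝ) := by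
    classical
    exact ContinuousLinearMap.isOpenMap _ fun r => ⟨EuclideanSpace.single i r, by simp⟩
  have := hopen.preimage_frontier_eq_frontier_preimage (EuclideanSpace.proj i).continuous (Ioi 0)
  rw [frontier_Ioi] at this
  exact this.symm

theorem EuclideanSpace.norm_sq_fin_two (z : EuclideanSpace ℝ (Fin 2)) :
    ‖z‖ ^ 2 = z 0 ^ 2 + z 1 ^ 2 := by
  simp [EuclideanSpace.real_norm_sq_eq, Fin.sum_univ_two]

theorem cassini_product_eq (β γ d t : ℝ) :
    ((γ - t) ^ 2 + (d + β) ^ 2) * ((γ + t) ^ 2 + (d - β) ^ 2)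
      = (t ^ 2 - β ^ 2 - γ ^ 2 + d ^ 2) ^ 2 + 4 * (t * β + γ * d) ^ 2 := by
  ring

theorem cassini_product_zero_le (β γ d : ℝ) :
    (γ ^ 2 + (d + β) ^ 2) * (γ ^ 2 + (d - β) ^ 2) ≤ (d ^ 2 + β ^ 2 + γ ^ 2) ^ 2 := by
  nlinarith [cassini_product_eq β γ d 0, sq_nonneg β]

theorem exists_cassini_product_le {β γ d : ℝ} (hβ : |β| ≤ d) (hd : d ^ 2 ≤ β ^ 2 + γ ^ 2) :
    ∃ t, ((γ - t) ^ 2 + (d + β) ^ 2) * ((γ + t) ^ 2 + (d - β) ^ 2)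
      ≤ 4 * d ^ 2 * (β ^ 2 + γ ^ 2) := by
  set s := √(β ^ 2 + γ ^ 2 - d ^ 2)
  have hs2 : s ^ 2 = β ^ 2 + γ ^ 2 - d ^ 2 := Real.sq_sqrt (by linarith)
  have hsγ : s ≤ |γ| := by
    rw [← Real.sqrt_sq_eq_abs]
    exact Real.sqrt_le_sqrt (by nlinarith [sq_abs β, abs_nonneg β])
  obtain ⟨t, ht2, htβγ⟩ : ∃ t, t ^ 2 = s ^ 2 ∧ t * (β * γ) = -(s * |β * γ|) := by
    rcases le_total (β * γ) 0 with h | h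
    · exact ⟨s, rfl, by rw [abs_of_nonpos h]; ring⟩
    · exact ⟨-s, by ring, by rw [abs_of_nonneg h]; ring⟩
  have hs0 : 0 ≤ s := Real.sqrt_nonneg _
  have hcross : s ^ 2 * β ^ 2 ≤ d * (s * |β * γ|) :=
    calc s ^ 2 * β ^ 2 = |β| * (s * s * |β|) := by rw [← sq_abs β]; ring
      _ ≤ d * (s * |β| * s) := by
        rw [mul_right_comm s s]; exact mul_le_mul_of_nonneg_right hβ (by positivity)
      _ ≤ d * (s * |β| * |γ|) := by gcongr; linarith [abs_nonneg β]
      _ = d * (s * |β * γ|) := by rw [abs_mul]; ring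
  have hlin : (t * β + γ * d) ^ 2 = t ^ 2 * β ^ 2 + 2 * d * (t * (β * γ)) + γ ^ 2 * d ^ 2 := by ring
  refine ⟨t, ?_⟩
  have hroot : t ^ 2 - β ^ 2 - γ ^ 2 + d ^ 2 = 0 := by rw [ht2, hs2]; ring
  rw [cassini_product_eq, hroot, hlin, htβγ, ht2]
  nlinarith [sq_nonneg (d * β)]

theorem log_one_add_le_scTau_upperHalfPlane {x y : EuclideanSpace ℝ (Fin 2)} (hx : 0 < x 1)
    (hy : 0 < y 1) {c T M : ℝ} (hT : 0 ≤ T) (hM : 0 ≤ M)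
    (hprod : ((x 0 - c) ^ 2 + x 1 ^ 2) * ((y 0 - c) ^ 2 + y 1 ^ 2) ≤ M ^ 2)
    (hTM : T * √M ≤ ‖x - y‖) :
    Real.log (1 + T) ≤ scTau {z : EuclideanSpace ℝ (Fin 2) | z 1 > 0} x y := by
  have hcoord : ∀ z p : EuclideanSpace ℝ (Fin 2), p 1 = 0 → z 1 ≤ ‖z - p‖ := fun z p hp =>
    calc z 1 ≤ ‖(z - p) 1‖ := by simp [hp, le_abs_self]
      _ ≤ ‖z - p‖ := PiLp.norm_apply_le _ 1
  have hnorm : ∀ z : EuclideanSpace ℝ (Fin 2), ‖z - !₂[c, 0]‖ ^ 2 = (z 0 - c) ^ 2 + z 1 ^ 2 :=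
    fun z => by simp [EuclideanSpace.norm_sq_fin_two]
  have hfront := frontier_setOf_coord_pos (1 : Fin 2)
  refine log_one_add_le_scTau_s14 (mul_pos hx hy) (fun p hp => ?_) (p := !₂[c, 0])
    (by rw [hfront]; simp) hT ?_
  · rw [hfront] at hp
    exact mul_le_mul (hcoord x p hp) (hcoord y p hp) hy.le (hx.le.trans (hcoord x p hp))
  · have hle : ‖x - !₂[c, 0]‖ * ‖y - !₂[c, 0]‖ ≤ M :=
      le_of_pow_le_pow_left₀ two_ne_zero hM (by rw [mul_pow, hnorm, hnorm]; exact hprod)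
    exact (mul_le_mul_of_nonneg_left (Real.sqrt_le_sqrt hle) hT).trans hTM

theorem stmt14 (x y : EuclideanSpace ℝ (Fin 2))
    (hx : x ∈ {z : EuclideanSpace ℝ (Fin 2) | z 1 > 0})
    (hy : y ∈ {z : EuclideanSpace ℝ (Fin 2) | z 1 > 0})
    (d : ℝ) (hd : d = (x 1 + y 1) / 2) :
    (‖x - y‖ > 2 * d →
      scTau {z : EuclideanSpace ℝ (Fin 2) | z 1 > 0} x y
        ≥ Real.log (1 + Real.sqrt (‖x - y‖ / d))) ∧
    (‖x - y‖ ≤ 2 * d →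
      scTau {z : EuclideanSpace ℝ (Fin 2) | z 1 > 0} x y
        ≥ Real.log (1 + 2 * ‖x - y‖ / Real.sqrt (4 * d ^ 2 + ‖x - y‖ ^ 2))) := by
  have hx1 : 0 < x 1 := hx
  have hy1 : 0 < y 1 := hy
  have hd0 : 0 < d := by rw [hd]; linarith
  set q := ‖x - y‖ with hq
  set β := (x 1 - y 1) / 2 with hβ
  set γ := (x 0 - y 0) / 2
  have hq2 : q ^ 2 = 4 * (β ^ 2 + γ ^ 2) := by
    rw [hq, EuclideanSpace.norm_sq_fin_two]; simp only [PiLp.sub_apply]; ring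
  have hshift : ∀ t : ℝ, ((x 0 - ((x 0 + y 0) / 2 + t)) ^ 2 + x 1 ^ 2)
      * ((y 0 - ((x 0 + y 0) / 2 + t)) ^ 2 + y 1 ^ 2)
      = ((γ - t) ^ 2 + (d + β) ^ 2) * ((γ + t) ^ 2 + (d - β) ^ 2) := by
    intro t; rw [hd]; ring
  constructor
  · intro hfar
    obtain ⟨t, ht⟩ := exists_cassini_product_le (β := β) (γ := γ) (d := d)
      (abs_le.2 ⟨by rw [hβ, hd]; linarith, by rw [hβ, hd]; linarith⟩) (by nlinarith)
    refine log_one_add_le_scTau_upperHalfPlane hx1 hy1 (c := (x 0 + y 0) / 2 + t)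
      (M := q * d) (Real.sqrt_nonneg _) (by positivity) ?_ ?_
    · rw [hshift, mul_pow, hq2]; linarith
    · have hqd : q / d * (q * d) = q ^ 2 := by field_simp
      rw [← Real.sqrt_mul (by positivity), hqd, Real.sqrt_sq (norm_nonneg _)]
  · intro hnear
    refine log_one_add_le_scTau_upperHalfPlane hx1 hy1 (c := (x 0 + y 0) / 2)
      (M := (4 * d ^ 2 + q ^ 2) / 4) (by positivity) (by positivity) ?_ ?_
    · have h := hshift 0
      simp only [add_zero, sub_zero] at h
      rw [h, hq2]
      convert cassini_product_zero_le β γ d using 2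
      ring
    · have h4 : √(4 : ℝ) = 2 := by
        rw [show (4 : ℝ) = 2 ^ 2 by norm_num, Real.sqrt_sq zero_le_two]
      rw [Real.sqrt_div' _ (by norm_num : (0:ℝ) ≤ 4), h4]
      field_simp
      exact hq.le
end

section
/- For all x, y ∈ ℍ² with d := (x₂ + y₂)/2 and |x - y| < 2d, we have τ̃_{ℍ²}(x,y) ≤ log(1 + 2|x-y| / √(4d² - |x-y|²)). -/
lemma abs_apply_le_norm' (v : EuclideanSpace ℝ (Fin 2)) (i : Fin 2) : |v i| ≤ ‖v‖ := by
  rw [EuclideanSpace.norm_eq]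
  have h1 : |v i| = Real.sqrt (‖v i‖ ^ 2) := by
    rw [Real.sqrt_sq (norm_nonneg _), Real.norm_eq_abs]
  rw [h1]
  exact Real.sqrt_le_sqrt
    (Finset.single_le_sum (f := fun j => ‖v j‖ ^ 2) (fun j _ => sq_nonneg _) (Finset.mem_univ i))

theorem stmt15 (x y : EuclideanSpace ℝ (Fin 2))
    (hx : x ∈ {z : EuclideanSpace ℝ (Fin 2) | z 1 > 0})
    (hy : y ∈ {z : EuclideanSpace ℝ (Fin 2) | z 1 > 0})
    (d : ℝ) (hd : d = (x 1 + y 1) / 2) (h : ‖x - y‖ < 2 * d) :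
    scTau {z : EuclideanSpace ℝ (Fin 2) | z 1 > 0} x y
      ≤ Real.log (1 + 2 * ‖x - y‖ / Real.sqrt (4 * d ^ 2 - ‖x - y‖ ^ 2)) := by
  set D : Set (EuclideanSpace ℝ (Fin 2)) := {z | z 1 > 0} with hD
  have hx1 : 0 < x 1 := hx
  have hy1 : 0 < y 1 := hy
  have hxy0 : 0 ≤ ‖x - y‖ := norm_nonneg _
  have hA : 0 < 4 * d ^ 2 - ‖x - y‖ ^ 2 := by nlinarith
  set A := 4 * d ^ 2 - ‖x - y‖ ^ 2 with hAdef
  have hsA : 0 < Real.sqrt A := Real.sqrt_pos.mpr hA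
  -- frontier points have first coordinate 0
  have hfr : ∀ p ∈ frontier D, p 1 = 0 := by
    intro p hp
    rw [frontier_eq_closure_inter_closure] at hp
    have h1 : p ∈ closure D := hp.1
    have h2 : p ∈ closure Dᶜ := hp.2
    have hc1 : closure D ⊆ {z : EuclideanSpace ℝ (Fin 2) | 0 ≤ z 1} := by
      apply closure_minimal
      · intro z hz; exact le_of_lt (by simpa [hD] using hz)
      · exact isClosed_le continuous_const ((continuous_apply 1).comp (PiLp.continuous_ofLp 2 _))
    have hc2 : closure Dᶜ ⊆ {z : EuclideanSpace ℝ (Fin 2) | z 1 ≤ 0} := by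
      apply closure_minimal
      · intro z hz; exact not_lt.mp (by simpa [hD] using hz)
      · exact isClosed_le ((continuous_apply 1).comp (PiLp.continuous_ofLp 2 _)) continuous_const
    exact le_antisymm (hc2 h2) (hc1 h1)
  -- frontier is nonempty: 0 is in it
  have hne : (frontier D).Nonempty := by
    refine ⟨0, ?_, ?_⟩
    · rw [Metric.mem_closure_iff]
      intro ε hε
      refine ⟨EuclideanSpace.single 1 (ε / 2), ?_, ?_⟩
      · show (0:ℝ) < EuclideanSpace.single 1 (ε/2) 1
        simp [EuclideanSpace.single_apply]
        linarith
      · rw [dist_comm, dist_zero_right, EuclideanSpace.norm_single]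
        rw [Real.norm_eq_abs, abs_of_pos (by linarith)]
        linarith
    · intro h0
      have h0' : (0 : EuclideanSpace ℝ (Fin 2)) ∈ D := interior_subset h0
      have : (0:ℝ) < (0 : EuclideanSpace ℝ (Fin 2)) 1 := h0'
      simp at this
  haveI : Nonempty (frontier D) := hne.to_subtype
  unfold scTau
  have key : (⨆ p : frontier D, ‖x - y‖ / Real.sqrt (‖x - (p : EuclideanSpace ℝ (Fin 2))‖ * ‖y - (p : EuclideanSpace ℝ (Fin 2))‖))
      ≤ 2 * ‖x - y‖ / Real.sqrt A := by
    apply ciSup_le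
    intro p
    obtain ⟨q, hq⟩ := p
    have hq1 : q 1 = 0 := hfr q hq
    have hxq : x 1 ≤ ‖x - q‖ := by
      have := abs_apply_le_norm' (x - q) 1
      have hsub : (x - q) 1 = x 1 - q 1 := rfl
      rw [hsub, hq1, sub_zero, abs_of_pos hx1] at this
      exact this
    have hyq : y 1 ≤ ‖y - q‖ := by
      have := abs_apply_le_norm' (y - q) 1
      have hsub : (y - q) 1 = y 1 - q 1 := rfl
      rw [hsub, hq1, sub_zero, abs_of_pos hy1] at this
      exact this
    have hd2 : |x 1 - y 1| ≤ ‖x - y‖ := by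
      have := abs_apply_le_norm' (x - y) 1
      have hsub : (x - y) 1 = x 1 - y 1 := rfl
      rwa [hsub] at this
    have hsq : (x 1 - y 1) ^ 2 ≤ ‖x - y‖ ^ 2 := by
      calc (x 1 - y 1) ^ 2 = |x 1 - y 1| ^ 2 := (sq_abs _).symm
        _ ≤ ‖x - y‖ ^ 2 := pow_le_pow_left₀ (abs_nonneg _) hd2 2
    have hprod : A / 4 ≤ ‖x - q‖ * ‖y - q‖ := by nlinarith
    have hhalf : Real.sqrt A / 2 ≤ Real.sqrt (‖x - q‖ * ‖y - q‖) := by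
      have h4 : Real.sqrt (A / 4) = Real.sqrt A / 2 := by
        rw [show A / 4 = A / 2 ^ 2 by ring, Real.sqrt_div hA.le,
          Real.sqrt_sq (by norm_num : (0:ℝ) ≤ 2)]
      calc Real.sqrt A / 2 = Real.sqrt (A / 4) := h4.symm
        _ ≤ _ := Real.sqrt_le_sqrt hprod
    have hrw : 2 * ‖x - y‖ / Real.sqrt A = ‖x - y‖ / (Real.sqrt A / 2) := by
      field_simp
    rw [hrw]
    exact div_le_div_of_nonneg_left hxy0 (by positivity) hhalf
  have h1pos : (0:ℝ) < 1 + ⨆ p : frontier D, ‖x - y‖ / Real.sqrt (‖x - (p : EuclideanSpace ℝ (Fin 2))‖ * ‖y - (p : EuclideanSpace ℝ (Fin 2))‖) := by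
    have : (0:ℝ) ≤ ⨆ p : frontier D, ‖x - y‖ / Real.sqrt (‖x - (p : EuclideanSpace ℝ (Fin 2))‖ * ‖y - (p : EuclideanSpace ℝ (Fin 2))‖) :=
      Real.iSup_nonneg fun p => by positivity
    linarith
  apply Real.log_le_log h1pos
  linarith
end

section
/- The constant 1/4 in the inequality (1/4)ρ_{𝔹ⁿ}(x,y) ≤ τ̃_{𝔹ⁿ}(x,y) is sharp: with x = t e₁ and y = -t e₁ for t ∈ (0,1), the ratio τ̃_{𝔹ⁿ}(x,y)/ρ_{𝔹ⁿ}(x,y) = log(1 + 2t/√(1-t²)) / (2 log((1+t)/(1-t))) tends to 1/4 as t → 1⁻. -/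
/-!
For a unit vector `p`, Cauchy–Schwarz applied to `⟪p - x, p + x⟫ = 1 - ‖x‖²` gives
`‖x - p‖ ‖x + p‖ ≥ 1 - ‖x‖²`, with equality when `p` is the endpoint of the diameter
through `x`; so the supremum defining `τ̃(x, -x)` is attained there. For the limit, both
logarithms are `log (1 - t)` times a constant (`-1/2` and `-2`) plus a term bounded as `t → 1⁻`.
-/

open Real Filter Metric Topology

section InnerProductSpace

variable {E : Type*} [NormedAddCommGroup E] [InnerProductSpace ℝ E]

theorem norm_sq_sub_norm_sq_le_norm_sub_mul_norm_add (x y : E) :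
    ‖x‖ ^ 2 - ‖y‖ ^ 2 ≤ ‖x - y‖ * ‖x + y‖ := by
  have hinner : inner ℝ (x - y) (x + y) = ‖x‖ ^ 2 - ‖y‖ ^ 2 := by
    rw [inner_sub_left, inner_add_right, inner_add_right, real_inner_self_eq_norm_sq,
      real_inner_self_eq_norm_sq, real_inner_comm]
    ring
  exact hinner ▸ real_inner_le_norm _ _

theorem scTau_ball_smul_neg_smul {u : E} (hu : ‖u‖ = 1) {t : ℝ} (ht₀ : 0 ≤ t)
    (ht₁ : t < 1) :
    scTau (ball (0 : E) 1) (t • u) (-(t • u)) = Real.log (1 + 2 * t / √(1 - t ^ 2)) := by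
  have hfrontier : frontier (ball (0 : E) 1) = sphere 0 1 := frontier_ball 0 one_ne_zero
  have hdist : ‖t • u - -(t • u)‖ = 2 * t := by
    rw [sub_neg_eq_add, ← two_smul ℝ, smul_smul, norm_smul, hu, mul_one,
      Real.norm_of_nonneg (by positivity)]
  have hle : ∀ p : frontier (ball (0 : E) 1),
      2 * t / √(‖t • u - p‖ * ‖-(t • u) - p‖) ≤ 2 * t / √(1 - t ^ 2) := by
    rintro ⟨p, hp⟩
    rw [hfrontier, mem_sphere_zero_iff_norm] at hp
    have hprod : 1 - t ^ 2 ≤ ‖t • u - p‖ * ‖-(t • u) - p‖ := by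
      calc 1 - t ^ 2 = ‖p‖ ^ 2 - ‖t • u‖ ^ 2 := by
            rw [hp, norm_smul, hu, mul_one, Real.norm_of_nonneg ht₀, one_pow]
        _ ≤ ‖p - t • u‖ * ‖p + t • u‖ :=
            norm_sq_sub_norm_sq_le_norm_sub_mul_norm_add _ _
        _ = ‖t • u - p‖ * ‖-(t • u) - p‖ := by
            rw [norm_sub_rev, add_comm p, ← norm_neg (t • u + p), neg_add']
    exact div_le_div_of_nonneg_left (by positivity) (sqrt_pos.2 (by nlinarith))
      (sqrt_le_sqrt hprod)
  have hu_mem : u ∈ frontier (ball (0 : E) 1) := by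
    rw [hfrontier, mem_sphere_zero_iff_norm]; exact hu
  have hattained : ‖t • u - u‖ * ‖-(t • u) - u‖ = 1 - t ^ 2 := by
    rw [show t • u - u = (t - 1) • u by module, show -(t • u) - u = (-t - 1) • u by module,
      norm_smul, norm_smul, hu, Real.norm_eq_abs, Real.norm_eq_abs,
      abs_of_nonpos (by linarith), abs_of_neg (by linarith)]
    ring
  have : Nonempty (frontier (ball (0 : E) 1)) := ⟨⟨u, hu_mem⟩⟩
  rw [scTau, hdist]
  congr 2
  refine le_antisymm (ciSup_le hle) ?_
  exact le_ciSup_of_le ⟨_, Set.forall_mem_range.2 hle⟩ ⟨u, hu_mem⟩ (by rw [hattained])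

end InnerProductSpace

theorem tendsto_add_mul_div_add_mul_of_tendsto_atBot {α : Type*} {l : Filter α}
    {f g u : α → ℝ} {a b c d : ℝ} (hf : Tendsto f l (𝓝 a)) (hg : Tendsto g l (𝓝 b))
    (hu : Tendsto u l atBot) (hd : d ≠ 0) :
    Tendsto (fun x => (f x + c * u x) / (g x + d * u x)) l (𝓝 (c / d)) := by
  have hlim : Tendsto (fun x => (f x / u x + c) / (g x / u x + d)) l (𝓝 ((0 + c) / (0 + d))) :=
    ((hf.div_atBot hu).add_const c).div ((hg.div_atBot hu).add_const d) (by simpa using hd)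
  rw [zero_add, zero_add] at hlim
  refine hlim.congr' ?_
  filter_upwards [hu.eventually_ne_atBot 0] with x hx
  rw [← mul_div_mul_right _ _ hx]
  congr 1 <;> field_simp

theorem tendsto_log_one_sub_nhdsLT_one :
    Tendsto (fun t : ℝ => Real.log (1 - t)) (𝓝[<] 1) atBot := by
  refine tendsto_log_nhdsGT_zero.comp (tendsto_nhdsWithin_iff.2 ⟨?_, ?_⟩)
  · simpa using ((continuous_sub_left (1 : ℝ)).tendsto 1).mono_left nhdsWithin_le_nhds
  · filter_upwards [self_mem_nhdsWithin] with t ht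
    exact sub_pos.2 (Set.mem_Iio.1 ht)

theorem log_one_add_two_mul_div_sqrt_one_sub_sq {t : ℝ} (ht₀ : 0 ≤ t) (ht₁ : t < 1) :
    Real.log (1 + 2 * t / √(1 - t ^ 2))
      = Real.log (√(1 - t ^ 2) + 2 * t) - Real.log (1 + t) / 2 - Real.log (1 - t) / 2 := by
  have hsq : 0 < 1 - t ^ 2 := by nlinarith
  have hsqrt : 0 < √(1 - t ^ 2) := sqrt_pos.2 hsq
  calc Real.log (1 + 2 * t / √(1 - t ^ 2))
      _ = Real.log (√(1 - t ^ 2) + 2 * t) - Real.log √(1 - t ^ 2) := by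
        rw [one_add_div hsqrt.ne', log_div (by positivity) hsqrt.ne']
      _ = _ := by
        rw [log_sqrt hsq.le, show 1 - t ^ 2 = (1 + t) * (1 - t) by ring,
          log_mul (by linarith) (by linarith)]
        ring

theorem stmt16 (n : ℕ) (hn : 0 < n) :
    (∀ t ∈ Set.Ioo (0 : ℝ) 1,
      scTau (Metric.ball (0 : EuclideanSpace ℝ (Fin n)) 1)
          (t • EuclideanSpace.single (⟨0, hn⟩ : Fin n) (1 : ℝ))
          (-(t • EuclideanSpace.single (⟨0, hn⟩ : Fin n) (1 : ℝ)))
        = Real.log (1 + 2 * t / Real.sqrt (1 - t ^ 2))) ∧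
    Filter.Tendsto
      (fun t : ℝ =>
        Real.log (1 + 2 * t / Real.sqrt (1 - t ^ 2))
          / (2 * Real.log ((1 + t) / (1 - t))))
      (nhdsWithin 1 (Set.Iio 1)) (nhds (1 / 4)) := by
  have he : ‖EuclideanSpace.single (⟨0, hn⟩ : Fin n) (1 : ℝ)‖ = 1 := by simp
  refine ⟨fun t ht => scTau_ball_smul_neg_smul he ht.1.le ht.2, ?_⟩
  have hnum :
      ContinuousAt (fun t : ℝ => Real.log (√(1 - t ^ 2) + 2 * t) - Real.log (1 + t) / 2) 1 := by
    fun_prop (disch := norm_num)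
  have hden : ContinuousAt (fun t : ℝ => 2 * Real.log (1 + t)) 1 := by
    fun_prop (disch := norm_num)
  have hlim := tendsto_add_mul_div_add_mul_of_tendsto_atBot (c := -1 / 2)
    (hnum.tendsto.mono_left nhdsWithin_le_nhds) (hden.tendsto.mono_left nhdsWithin_le_nhds)
    tendsto_log_one_sub_nhdsLT_one (show (-2 : ℝ) ≠ 0 by norm_num)
  rw [show (-1 / 2 : ℝ) / -2 = 1 / 4 by norm_num] at hlim
  refine hlim.congr' ?_
  filter_upwards [Ioo_mem_nhdsLT (show (0 : ℝ) < 1 by norm_num)] with t ⟨ht₀, ht₁⟩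
  rw [log_one_add_two_mul_div_sqrt_one_sub_sq ht₀.le ht₁, log_div (by linarith) (by linarith)]
  ring
end

section
/- For all x, y ∈ ℍⁿ = {z ∈ ℝⁿ : zₙ > 0}, τ̃_{ℍⁿ}(x,y) ≤ (1/2)ρ_{ℍⁿ}(x,y) + log(5/4), where ρ_{ℍⁿ} is the hyperbolic metric of the upper half space defined by cosh ρ_{ℍⁿ}(x,y) = 1 + |x-y|²/(2 xₙ yₙ). Moreover equality holds for x = 2eₙ, y = (1/2)eₙ. -/
lemma aux_frontier_halfspace (n : ℕ) (i : Fin n) :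
    frontier {z : EuclideanSpace ℝ (Fin n) | z i > 0} = {z | z i = 0} := by
  have hsurj : Function.Surjective (EuclideanSpace.proj (𝕜 := ℝ) i) := fun c =>
    ⟨EuclideanSpace.single i c, by simp⟩
  have hopen := ContinuousLinearMap.isOpenMap (EuclideanSpace.proj (𝕜 := ℝ) i) hsurj
  have h : {z : EuclideanSpace ℝ (Fin n) | z i > 0}
      = (EuclideanSpace.proj (𝕜 := ℝ) i) ⁻¹' Set.Ioi 0 := rfl
  rw [h, ← hopen.preimage_frontier_eq_frontier_preimage (EuclideanSpace.proj i).continuous,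
    frontier_Ioi]
  ext z; simp

lemma aux_abs_apply_le_norm {n : ℕ} (v : EuclideanSpace ℝ (Fin n)) (i : Fin n) :
    |v i| ≤ ‖v‖ := by
  rw [EuclideanSpace.norm_eq]
  rw [show |v i| = Real.sqrt (|v i|^2) by rw [Real.sqrt_sq_eq_abs, abs_abs]]
  apply Real.sqrt_le_sqrt
  calc |v i|^2 = ‖v i‖^2 := by rw [Real.norm_eq_abs]
  _ ≤ ∑ j, ‖v j‖^2 :=
    Finset.single_le_sum (f := fun j => ‖v j‖^2) (fun j _ => by positivity) (Finset.mem_univ i)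

lemma aux_key_bound {n : ℕ} (i : Fin n) (x y : EuclideanSpace ℝ (Fin n))
    (hx : 0 < x i) (hy : 0 < y i) (p : EuclideanSpace ℝ (Fin n)) (hp : p i = 0) :
    ‖x - y‖ / Real.sqrt (‖x - p‖ * ‖y - p‖) ≤ ‖x - y‖ / Real.sqrt (x i * y i) := by
  have hxp : x i ≤ ‖x - p‖ := by
    calc x i ≤ |(x - p) i| := by rw [PiLp.sub_apply, hp, sub_zero]; exact le_abs_self _
    _ ≤ ‖x - p‖ := aux_abs_apply_le_norm _ _
  have hyp : y i ≤ ‖y - p‖ := by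
    calc y i ≤ |(y - p) i| := by rw [PiLp.sub_apply, hp, sub_zero]; exact le_abs_self _
    _ ≤ ‖y - p‖ := aux_abs_apply_le_norm _ _
  have h1 : Real.sqrt (x i * y i) ≤ Real.sqrt (‖x - p‖ * ‖y - p‖) := by
    apply Real.sqrt_le_sqrt
    exact mul_le_mul hxp hyp hy.le (le_trans hx.le hxp)
  have h2 : 0 < Real.sqrt (x i * y i) := Real.sqrt_pos.mpr (by positivity)
  exact div_le_div_of_nonneg_left (norm_nonneg _) h2 h1

theorem stmt17 (n : ℕ) (hn : 0 < n) :
    (∀ x ∈ {z : EuclideanSpace ℝ (Fin n) | z ⟨n - 1, by omega⟩ > 0},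
     ∀ y ∈ {z : EuclideanSpace ℝ (Fin n) | z ⟨n - 1, by omega⟩ > 0},
     ∀ r : ℝ, 0 ≤ r →
      Real.cosh r = 1 + ‖x - y‖ ^ 2 / (2 * x ⟨n - 1, by omega⟩ * y ⟨n - 1, by omega⟩) →
      scTau {z : EuclideanSpace ℝ (Fin n) | z ⟨n - 1, by omega⟩ > 0} x y
        ≤ (1 / 2) * r + Real.log (5 / 4)) ∧
    (∀ r : ℝ, 0 ≤ r →
      Real.cosh r = 1 +
        ‖(2 : ℝ) • EuclideanSpace.single (⟨n - 1, by omega⟩ : Fin n) (1 : ℝ)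
          - (1 / 2 : ℝ) • EuclideanSpace.single (⟨n - 1, by omega⟩ : Fin n) (1 : ℝ)‖ ^ 2
          / (2 * 2 * (1 / 2)) →
      scTau {z : EuclideanSpace ℝ (Fin n) | z ⟨n - 1, by omega⟩ > 0}
          ((2 : ℝ) • EuclideanSpace.single (⟨n - 1, by omega⟩ : Fin n) (1 : ℝ))
          ((1 / 2 : ℝ) • EuclideanSpace.single (⟨n - 1, by omega⟩ : Fin n) (1 : ℝ))
        = (1 / 2) * r + Real.log (5 / 4)) := by
  set i : Fin n := ⟨n - 1, by omega⟩ with hi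
  set D : Set (EuclideanSpace ℝ (Fin n)) := {z | z i > 0} with hD
  have hfront : frontier D = {z | z i = 0} := aux_frontier_halfspace n i
  have h0mem : (0 : EuclideanSpace ℝ (Fin n)) ∈ frontier D := by
    rw [hfront]; simp [Set.mem_setOf_eq]
  haveI : Nonempty (frontier D) := ⟨⟨0, h0mem⟩⟩
  -- the general supremum bound
  have hsup_le : ∀ x y : EuclideanSpace ℝ (Fin n), 0 < x i → 0 < y i →
      (⨆ p : frontier D, ‖x - y‖ / Real.sqrt (‖x - (p : EuclideanSpace ℝ (Fin n))‖
        * ‖y - (p : EuclideanSpace ℝ (Fin n))‖)) ≤ ‖x - y‖ / Real.sqrt (x i * y i) := by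
    intro x y hx hy
    apply ciSup_le
    intro p
    have hp : (p : EuclideanSpace ℝ (Fin n)) i = 0 := by
      exact (Set.ext_iff.mp hfront _).mp p.2
    exact aux_key_bound i x y hx hy p hp
  have hsup_nonneg : ∀ x y : EuclideanSpace ℝ (Fin n),
      0 ≤ ⨆ p : frontier D, ‖x - y‖ / Real.sqrt (‖x - (p : EuclideanSpace ℝ (Fin n))‖
        * ‖y - (p : EuclideanSpace ℝ (Fin n))‖) := by
    intro x y
    apply Real.iSup_nonneg
    intro p; positivity
  constructor
  · intro x hx y hy r hr hcosh
    replace hx : 0 < x i := hx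
    replace hy : 0 < y i := hy
    set t : ℝ := ‖x - y‖ / Real.sqrt (x i * y i) with ht
    have hxy : (0:ℝ) < x i * y i := by positivity
    have ht0 : 0 ≤ t := by positivity
    have ht2 : t ^ 2 = ‖x - y‖ ^ 2 / (x i * y i) := by
      rw [ht, div_pow, Real.sq_sqrt hxy.le]
    set u : ℝ := Real.exp (r / 2) with hu
    have hu1 : 1 ≤ u := by
      rw [hu]; calc (1:ℝ) = Real.exp 0 := (Real.exp_zero).symm
      _ ≤ Real.exp (r / 2) := Real.exp_le_exp.mpr (by linarith)
    have hu0 : 0 < u := lt_of_lt_of_le one_pos hu1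
    have hexp : Real.exp r = u * u := by
      rw [hu, ← Real.exp_add]; ring_nf
    have hexpneg : Real.exp (-r) = 1 / (u * u) := by
      rw [Real.exp_neg, hexp]; rw [one_div]
    have ht2' : t ^ 2 = (u - 1 / u) ^ 2 := by
      have hc := hcosh
      rw [Real.cosh_eq, hexp, hexpneg] at hc
      have hnorm : ‖x - y‖ ^ 2 = (Real.cosh r - 1) * (2 * x i * y i) := by
        field_simp at hcosh ⊢
        nlinarith [hcosh]
      rw [Real.cosh_eq, hexp, hexpneg] at hnorm
      rw [ht2, hnorm]
      field_simp
      ring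
    have htu : t = u - 1 / u := by
      have h1 : 0 ≤ u - 1 / u := by
        have : 1 / u ≤ 1 := by
          rw [div_le_one hu0]; exact hu1
        linarith
      rw [← Real.sqrt_sq ht0, ht2', Real.sqrt_sq h1]
    -- main chain
    have hlog1 : scTau D x y ≤ Real.log (1 + t) := by
      unfold scTau
      apply Real.log_le_log (by linarith [hsup_nonneg x y])
      linarith [hsup_le x y hx hy]
    have hrhs : (1 / 2) * r + Real.log (5 / 4) = Real.log (u * (5 / 4)) := by
      rw [Real.log_mul (by positivity) (by norm_num), hu, Real.log_exp]
      ring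
    rw [hrhs]
    refine le_trans hlog1 (Real.log_le_log (by positivity) ?_)
    rw [htu]
    have h1u : 1 / u * u = 1 := by field_simp
    nlinarith [sq_nonneg (u - 2), hu0, h1u]
  · intro r hr hcosh
    set e : EuclideanSpace ℝ (Fin n) := EuclideanSpace.single i (1:ℝ) with he
    set x : EuclideanSpace ℝ (Fin n) := (2:ℝ) • e with hx
    set y : EuclideanSpace ℝ (Fin n) := (1/2:ℝ) • e with hy
    have hxi : x i = 2 := by
      rw [hx, he]; simp [PiLp.smul_apply, EuclideanSpace.single_apply]
    have hyi : y i = 1/2 := by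
      rw [hy, he]; simp [PiLp.smul_apply, EuclideanSpace.single_apply]
    have hxmy : x - y = (3/2:ℝ) • e := by
      rw [hx, hy, ← sub_smul]; norm_num
    have hnxy : ‖x - y‖ = 3/2 := by
      rw [hxmy, norm_smul, he, EuclideanSpace.norm_single]
      norm_num
    have hnx : ‖x‖ = 2 := by
      rw [hx, norm_smul, he, EuclideanSpace.norm_single]; norm_num
    have hny : ‖y‖ = 1/2 := by
      rw [hy, norm_smul, he, EuclideanSpace.norm_single]; norm_num
    -- from hcosh derive exp r = 4
    have hc : Real.cosh r = 17/8 := by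
      rw [hcosh, hnxy]; norm_num
    set u : ℝ := Real.exp r with hu
    have hu0 : 0 < u := Real.exp_pos r
    have hu1 : 1 ≤ u := by
      rw [hu]; calc (1:ℝ) = Real.exp 0 := (Real.exp_zero).symm
      _ ≤ Real.exp r := Real.exp_le_exp.mpr hr
    have hueq : u + 1/u = 17/4 := by
      have := hc
      rw [Real.cosh_eq, Real.exp_neg, ← hu, ← one_div] at this
      linarith
    have hu4 : u = 4 := by
      have hq : (u - 4) * (u - 1/4) = 0 := by
        have h : u * u + 1 = 17/4 * u := by
          field_simp at hueq; linarith
        linear_combination h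
      rcases mul_eq_zero.mp hq with h | h
      · linarith
      · exfalso; linarith
    have hrlog : r = Real.log 4 := by
      rw [← Real.log_exp r, ← hu, hu4]
    -- compute the supremum
    have hsupub : ∀ p : frontier D, ‖x - y‖ / Real.sqrt (‖x - (p : EuclideanSpace ℝ (Fin n))‖
        * ‖y - (p : EuclideanSpace ℝ (Fin n))‖) ≤ 3/2 := by
      intro p
      have hp : (p : EuclideanSpace ℝ (Fin n)) i = 0 := by
        exact (Set.ext_iff.mp hfront _).mp p.2
      have h := aux_key_bound i x y (by rw [hxi]; norm_num) (by rw [hyi]; norm_num) p hp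
      rw [hxi, hyi, hnxy] at h
      rw [hnxy]
      refine le_trans h ?_
      rw [show (2:ℝ) * (1/2) = 1 by norm_num, Real.sqrt_one]
      norm_num
    have hbdd : BddAbove (Set.range fun p : frontier D =>
        ‖x - y‖ / Real.sqrt (‖x - (p : EuclideanSpace ℝ (Fin n))‖
          * ‖y - (p : EuclideanSpace ℝ (Fin n))‖)) := by
      refine ⟨3/2, ?_⟩
      rintro _ ⟨p, rfl⟩
      exact hsupub p
    have hsupeq : (⨆ p : frontier D, ‖x - y‖ / Real.sqrt (‖x - (p : EuclideanSpace ℝ (Fin n))‖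
        * ‖y - (p : EuclideanSpace ℝ (Fin n))‖)) = 3/2 := by
      apply le_antisymm (ciSup_le hsupub)
      have := le_ciSup hbdd (⟨0, h0mem⟩ : frontier D)
      have hval : ‖x - y‖ / Real.sqrt (‖x - (0:EuclideanSpace ℝ (Fin n))‖
          * ‖y - (0:EuclideanSpace ℝ (Fin n))‖) = 3/2 := by
        rw [sub_zero, sub_zero, hnxy, hnx, hny]
        norm_num
      rw [hval] at this
      exact this
    have hlhs : scTau D x y = Real.log (5/2) := by
      unfold scTau
      rw [hsupeq]; norm_num
    have hrhs : (1/2) * r + Real.log (5/4) = Real.log (5/2) := by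
      have h42 : Real.log 4 = 2 * Real.log 2 := by
        rw [show (4:ℝ) = 2^2 by norm_num, Real.log_pow]; push_cast; ring
      rw [hrlog, h42, show (1/2:ℝ) * (2 * Real.log 2) = Real.log 2 by ring,
        ← Real.log_mul (by norm_num) (by norm_num)]
      norm_num
    rw [hlhs, hrhs]
end
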